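/- arXiv:1708.04002 — 15 statements merged into one kernel-verified Lean document; each statement's English description precedes it below -/
import Mathlib

section
/- Let k be a field of characteristic different from 2 and 3, and let r, s ∈ k with r, s ∉ {0, 1}. Set j(z) = 4(z²−z+1)³/(27 z²(z−1)²), x = j(r)+j(s), y = j(r)·j(s), and define u = 4(r²−r+1)³(s²−s+1)³, v = (rs−2r+s+1)(rs+r−2s+1)(2rs−r−s+2), v' = (rs+r+s−2)(2rs−r−s−1)(rs−2r−2s+1). If v ≠ 0 and v' ≠ 0, then x ≠ y and the two identities u/v² + u/v'² = 2y(y−x+2)/(x−y)² and (u/v²)·(u/v'²) = y²/(x−y)² hold. (This is the computational content of the theorem that the Steiner construction applied to a Pappus structure of signature [x,y] yields a Pappus structure of signature [2y(y−x+2)/(x−y)², y²/(x−y)²].) -/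
/-!
Clearing the denominators `27 r²(r−1)²` and `27 s²(s−1)²` of `j(r)` and `j(s)` turns `y` and
`x − y` into polynomials, and their product is `(v − v')²` because `v − v' = 27 r(r−1) s(s−1)`.
This gives `y (v − v')² = 4u` and `(x − y)(v − v')² = −4vv'`, from which both symmetric functions
of `u/v²` and `u/v'²` are read off without further reference to `r` and `s`.
-/

def jfun {k : Type*} [Field k] (z : k) : k :=
  4 * (z ^ 2 - z + 1) ^ 3 / (27 * z ^ 2 * (z - 1) ^ 2)

theorem jfun_mul_denom {k : Type*} [Field k] {z : k} (h3 : (3 : k) ≠ 0) (hz0 : z ≠ 0)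
    (hz1 : z ≠ 1) : jfun z * (27 * z ^ 2 * (z - 1) ^ 2) = 4 * (z ^ 2 - z + 1) ^ 3 := by
  have h27 : (27 : k) ≠ 0 := by rw [show (27 : k) = 3 ^ 3 by norm_num]; exact pow_ne_zero 3 h3
  exact div_mul_cancel₀ _ <|
    mul_ne_zero (mul_ne_zero h27 (pow_ne_zero 2 hz0)) (pow_ne_zero 2 (sub_ne_zero.mpr hz1))

theorem signature_of_steiner_relations {k : Type*} [Field k] {u v v' x y : k}
    (h2 : (2 : k) ≠ 0) (hv : v ≠ 0) (hv' : v' ≠ 0)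
    (hxy : (x - y) * (v - v') ^ 2 = -(4 * v * v')) (hy : y * (v - v') ^ 2 = 4 * u) :
    x ≠ y ∧
    u / v ^ 2 + u / v' ^ 2 = 2 * y * (y - x + 2) / (x - y) ^ 2 ∧
    (u / v ^ 2) * (u / v' ^ 2) = y ^ 2 / (x - y) ^ 2 := by
  have h4 : (4 : k) ≠ 0 := by rw [show (4 : k) = 2 * 2 by norm_num]; exact mul_ne_zero h2 h2
  have hrhs : -(4 * v * v') ≠ 0 := by simp [h4, hv, hv']
  have hw : v - v' ≠ 0 := pow_ne_zero_iff two_ne_zero |>.mp (right_ne_zero_of_mul (hxy ▸ hrhs))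
  have hX : x - y = -(4 * v * v') / (v - v') ^ 2 := (eq_div_iff (pow_ne_zero 2 hw)).mpr hxy
  have hY : y = 4 * u / (v - v') ^ 2 := (eq_div_iff (pow_ne_zero 2 hw)).mpr hy
  refine ⟨sub_ne_zero.mp (left_ne_zero_of_mul (hxy ▸ hrhs)), ?_, ?_⟩
  · rw [show y - x + 2 = 2 - (x - y) by ring, hX, hY]
    field_simp
    ring
  · rw [hX, hY]
    field_simp

/-- Computational content of the Pappus–Steiner signature theorem:
the Steiner construction applied to a Pappus structure of signature `[x,y]`
yields a Pappus structure of signature `[2y(y−x+2)/(x−y)², y²/(x−y)²]`. -/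
theorem pappus_steiner_signature {k : Type*} [Field k]
    (hchar2 : ringChar k ≠ 2) (hchar3 : ringChar k ≠ 3)
    (r s : k) (hr0 : r ≠ 0) (hr1 : r ≠ 1) (hs0 : s ≠ 0) (hs1 : s ≠ 1)
    (x y u v v' : k)
    (hx : x = jfun r + jfun s)
    (hy : y = jfun r * jfun s)
    (hu : u = 4 * (r ^ 2 - r + 1) ^ 3 * (s ^ 2 - s + 1) ^ 3)
    (hv : v = (r * s - 2 * r + s + 1) * (r * s + r - 2 * s + 1) * (2 * r * s - r - s + 2))
    (hv' : v' = (r * s + r + s - 2) * (2 * r * s - r - s - 1) * (r * s - 2 * r - 2 * s + 1))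
    (hvne : v ≠ 0) (hv'ne : v' ≠ 0) :
    x ≠ y ∧
    u / v ^ 2 + u / v' ^ 2 = 2 * y * (y - x + 2) / (x - y) ^ 2 ∧
    (u / v ^ 2) * (u / v' ^ 2) = y ^ 2 / (x - y) ^ 2 := by
  have h3 : (3 : k) ≠ 0 := CharP.cast_ne_zero_of_ne_of_prime k Nat.prime_three hchar3
  have hjr := jfun_mul_denom h3 hr0 hr1
  have hjs := jfun_mul_denom h3 hs0 hs1
  have hw : v - v' = 27 * r * (r - 1) * s * (s - 1) := by rw [hv, hv']; ring
  refine signature_of_steiner_relations (Ring.two_ne_zero hchar2) hvne hv'ne ?_ ?_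
  · rw [hw, hx, hy, hv, hv']
    linear_combination (27 * s ^ 2 * (s - 1) ^ 2 * (1 - jfun s)) * hjr +
      (27 * r ^ 2 * (r - 1) ^ 2 - 4 * (r ^ 2 - r + 1) ^ 3) * hjs
  · rw [hw, hy, hu]
    linear_combination (jfun s * (27 * s ^ 2 * (s - 1) ^ 2)) * hjr +
      4 * (r ^ 2 - r + 1) ^ 3 * hjs
end

section
/- Let k be a field of characteristic different from 2 and 3, and let r, s ∈ k with r, s ∉ {0, 1}. Set j(z) = 4(z²−z+1)³/(27 z²(z−1)²), x = j(r)+j(s), y = j(r)·j(s), v = (rs−2r+s+1)(rs+r−2s+1)(2rs−r−s+2), and v' = (rs+r+s−2)(2rs−r−s−1)(rs−2r−2s+1). Then x − y = −4·v·v' / (27·r(r−1)·s(s−1))². In particular, x ≠ y if and only if v·v' ≠ 0. -/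
/-- `x − y = −4 v v' / (27 r(r−1) s(s−1))²`, and hence `x ≠ y` iff `v v' ≠ 0`. -/
theorem signature_difference_formula {k : Type*} [Field k]
    (hchar2 : ringChar k ≠ 2) (hchar3 : ringChar k ≠ 3)
    (r s : k) (hr0 : r ≠ 0) (hr1 : r ≠ 1) (hs0 : s ≠ 0) (hs1 : s ≠ 1)
    (x y v v' : k)
    (hx : x = jfun r + jfun s)
    (hy : y = jfun r * jfun s)
    (hv : v = (r * s - 2 * r + s + 1) * (r * s + r - 2 * s + 1) * (2 * r * s - r - s + 2))
    (hv' : v' = (r * s + r + s - 2) * (2 * r * s - r - s - 1) * (r * s - 2 * r - 2 * s + 1)) :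
    x - y = -4 * v * v' / (27 * r * (r - 1) * s * (s - 1)) ^ 2 ∧
    (x ≠ y ↔ v * v' ≠ 0) := by
  have h2 : (2 : k) ≠ 0 := by
    simpa using Ring.two_ne_zero (by simpa using hchar2)
  have h3 : (3 : k) ≠ 0 := fun h =>
    hchar3 (CharP.ringChar_of_prime_eq_zero (by norm_num) (by exact_mod_cast h))
  have h4 : (4 : k) ≠ 0 := by
    have : (4 : k) = 2 * 2 := by norm_num
    rw [this]; exact mul_ne_zero h2 h2
  have h27 : (27 : k) ≠ 0 := by
    have : (27 : k) = 3 * 3 * 3 := by norm_num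
    rw [this]; exact mul_ne_zero (mul_ne_zero h3 h3) h3
  have hr1' : r - 1 ≠ 0 := sub_ne_zero.mpr hr1
  have hs1' : s - 1 ≠ 0 := sub_ne_zero.mpr hs1
  have hmain : x - y = -4 * v * v' / (27 * r * (r - 1) * s * (s - 1)) ^ 2 := by
    subst hx hy hv hv'
    rw [jfun, jfun]
    field_simp
    ring
  refine ⟨hmain, ?_⟩
  rw [← sub_ne_zero, hmain]
  have hn4 : (-4 : k) ≠ 0 := by simpa using h4
  simp [div_eq_zero_iff, mul_assoc, mul_eq_zero, hn4, h4, h27, hr0, hr1', hs0, hs1']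
end

section
/- Let k be a field of characteristic different from 2 and 3, and let π(x,y) = (2y(y−x+2)/(x−y)², y²/(x−y)²) be the Pappus–Steiner map, defined for x ≠ y. Then: (i) for every t ∈ k, π(t+1, t) = (2t, t²), a point satisfying the balanced condition p² = 4q; and (ii) for every t ∈ k with t ≠ 0 and t ≠ 2, π(2t, t²) = (2(t²−2t+2)/(t−2)², t²/(t−2)²), a point satisfying the harmonic condition p = q + 1. Hence π maps the harmonic line H = {x = y+1} into the balanced parabola B = {x² = 4y} and maps B into H. -/
/-- The Pappus–Steiner map `π(x,y) = (2y(y−x+2)/(x−y)², y²/(x−y)²)`. -/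
def pap {k : Type*} [Field k] (z : k × k) : k × k :=
  (2 * z.2 * (z.2 - z.1 + 2) / (z.1 - z.2) ^ 2, z.2 ^ 2 / (z.1 - z.2) ^ 2)

/-- `π` maps the harmonic line `x = y + 1` into the balanced parabola `x² = 4y`,
and maps the balanced parabola into the harmonic line. -/
theorem pap_harmonic_balanced {k : Type*} [Field k]
    (hchar2 : ringChar k ≠ 2) (hchar3 : ringChar k ≠ 3) :
    (∀ t : k, pap ((t + 1, t) : k × k) = (2 * t, t ^ 2) ∧ (2 * t) ^ 2 = 4 * t ^ 2) ∧
    (∀ t : k, t ≠ 0 → t ≠ 2 →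
      pap ((2 * t, t ^ 2) : k × k) =
        (2 * (t ^ 2 - 2 * t + 2) / (t - 2) ^ 2, t ^ 2 / (t - 2) ^ 2) ∧
      2 * (t ^ 2 - 2 * t + 2) / (t - 2) ^ 2 = t ^ 2 / (t - 2) ^ 2 + 1) := by
  constructor
  · intro t
    constructor
    · simp only [pap, Prod.mk.injEq]
      constructor <;> ring_nf
    · ring
  · intro t ht ht2
    have h2 : t - 2 ≠ 0 := sub_ne_zero.mpr ht2
    have hd : 2 * t - t ^ 2 ≠ 0 := by
      intro h
      apply h2
      have : t * (2 - t) = 0 := by linear_combination h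
      rcases mul_eq_zero.mp this with h | h
      · exact absurd h ht
      · linear_combination -h
    constructor
    · simp only [pap, Prod.mk.injEq]
      constructor <;> · field_simp; ring
    · field_simp
      ring
end

section
/- Let k be a field of characteristic different from 2 and 3, let π(x,y) = (2y(y−x+2)/(x−y)², y²/(x−y)²) for x ≠ y, and let α(t) = t²/(t−2)². Then for every t ∈ k with t ≠ 0 and t ≠ 2: (i) π(π(t+1, t)) = (α(t)+1, α(t)); and (ii) if moreover α(t) ≠ 0 and α(t) ≠ 2 (so the second iterate on the balanced parabola is defined), π(π(2t, t²)) = (2α(t), α(t)²). That is, the second iterate π² maps the harmonic line to itself and the balanced parabola to itself, and in the natural parametrizations both restrictions are given by the same formula α(t) = t²/(t−2)². -/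
/-- The second iterate `π²` maps the harmonic line to itself and the balanced parabola
to itself, and in the natural parametrizations both restrictions are given by the same
formula `α(t) = t²/(t−2)²`. -/
theorem pap_sq_harmonic_balanced {k : Type*} [Field k]
    (hchar2 : ringChar k ≠ 2) (hchar3 : ringChar k ≠ 3) :
    ∀ t : k, t ≠ 0 → t ≠ 2 →
      pap (pap ((t + 1, t) : k × k)) = (t ^ 2 / (t - 2) ^ 2 + 1, t ^ 2 / (t - 2) ^ 2) ∧
      (t ^ 2 / (t - 2) ^ 2 ≠ 0 → t ^ 2 / (t - 2) ^ 2 ≠ 2 →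
        pap (pap ((2 * t, t ^ 2) : k × k)) =
          (2 * (t ^ 2 / (t - 2) ^ 2), (t ^ 2 / (t - 2) ^ 2) ^ 2)) := by
  intro t ht ht2
  have h2 : t - 2 ≠ 0 := sub_ne_zero.mpr ht2
  have hd : 2 * t - t ^ 2 ≠ 0 := by
    intro h
    apply h2
    have : t * (2 - t) = 0 := by linear_combination h
    rcases mul_eq_zero.mp this with h' | h'
    · exact absurd h' ht
    · linear_combination -h'
  constructor
  · simp only [pap, Prod.mk.injEq]
    have h1 : t + 1 - t = 1 := by ring
    rw [h1]
    norm_num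
    constructor <;> · field_simp; ring
  · intro _ _
    simp only [pap, Prod.mk.injEq]
    have hB : (t ^ 2) ^ 2 / (2 * t - t ^ 2) ^ 2 = t ^ 2 / (t - 2) ^ 2 := by
      field_simp; ring
    have hA : 2 * t ^ 2 * (t ^ 2 - 2 * t + 2) / (2 * t - t ^ 2) ^ 2 =
        t ^ 2 / (t - 2) ^ 2 + 1 := by
      field_simp; ring
    rw [hA, hB]
    have h1 : t ^ 2 / (t - 2) ^ 2 + 1 - t ^ 2 / (t - 2) ^ 2 = 1 := by ring
    rw [h1]
    constructor
    · field_simp; ring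
    · field_simp
end

section
/- Let k be a field of characteristic different from 2 and 3, let π(x,y) = (2y(y−x+2)/(x−y)², y²/(x−y)²) for x ≠ y, and define τ(x,y) = ((2y−x)/(y−x+1), y/(y−x+1)) for y−x+1 ≠ 0. Let (x,y) ∈ k² satisfy x ≠ y and y−x+1 ≠ 0. Then the point (x',y') = τ(x,y) again satisfies x' ≠ y' and y'−x'+1 ≠ 0, and moreover τ(τ(x,y)) = (x,y) and π(τ(x,y)) = π(x,y). That is, τ is an involution interchanging the two sheets of the double cover π. -/
/-- The involution associated to the Pappus–Steiner map:
`τ(x,y) = ((2y−x)/(y−x+1), y/(y−x+1))`. -/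
def tauInv {k : Type*} [Field k] (z : k × k) : k × k :=
  ((2 * z.2 - z.1) / (z.2 - z.1 + 1), z.2 / (z.2 - z.1 + 1))

/-!
Write `d = y − x + 1`, so that `τ(x,y) = d⁻¹ • (2y − x, y)`. Then `y' − x' = (x − y)/d`, hence
`y' − x' + 1 = d⁻¹`, and applying `τ` again multiplies `(2y' − x', y') = d⁻¹ • (x, y)` by `d`.
Likewise `y'`, `x' − y'` and `y' − x' + 2` are `y`, `y − x` and `y − x + 2` divided by `d`, so
the numerators and denominators of both components of `π` pick up the same factor `d⁻²`.
-/

section TauInv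

variable {k : Type*} [Field k]

theorem tauInv_snd_sub_fst (z : k × k) (hz : z.2 - z.1 + 1 ≠ 0) :
    (tauInv z).2 - (tauInv z).1 = (z.1 - z.2) / (z.2 - z.1 + 1) := by
  simp only [tauInv]
  field_simp
  ring

theorem tauInv_snd_sub_fst_add_one (z : k × k) (hz : z.2 - z.1 + 1 ≠ 0) :
    (tauInv z).2 - (tauInv z).1 + 1 = (z.2 - z.1 + 1)⁻¹ := by
  rw [tauInv_snd_sub_fst z hz]
  field_simp
  ring

theorem tauInv_fst_ne_snd {z : k × k} (hz : z.2 - z.1 + 1 ≠ 0) (hne : z.1 ≠ z.2) :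
    (tauInv z).1 ≠ (tauInv z).2 := by
  rw [ne_comm, ← sub_ne_zero, tauInv_snd_sub_fst z hz]
  exact div_ne_zero (sub_ne_zero.mpr hne) hz

theorem tauInv_snd_sub_fst_add_one_ne_zero {z : k × k} (hz : z.2 - z.1 + 1 ≠ 0) :
    (tauInv z).2 - (tauInv z).1 + 1 ≠ 0 := by
  rw [tauInv_snd_sub_fst_add_one z hz]
  exact inv_ne_zero hz

theorem tauInv_tauInv {z : k × k} (hz : z.2 - z.1 + 1 ≠ 0) : tauInv (tauInv z) = z := by
  conv_lhs => rw [tauInv, tauInv_snd_sub_fst_add_one z hz]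
  simp only [tauInv, div_inv_eq_mul]
  ext
  · field_simp
    ring
  · field_simp

theorem pap_tauInv {z : k × k} (hz : z.2 - z.1 + 1 ≠ 0) : pap (tauInv z) = pap z := by
  have hsq : ((tauInv z).1 - (tauInv z).2) ^ 2 = (z.1 - z.2) ^ 2 / (z.2 - z.1 + 1) ^ 2 := by
    rw [← neg_sub, neg_sq, tauInv_snd_sub_fst z hz, div_pow]
  have hadd : (tauInv z).2 - (tauInv z).1 + 2 = (z.2 - z.1 + 2) / (z.2 - z.1 + 1) := by
    rw [tauInv_snd_sub_fst z hz]
    field_simp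
    ring
  simp only [pap, hsq, hadd]
  simp only [tauInv]
  ext <;> field_simp

end TauInv

theorem tau_involution_general {k : Type*} [Field k]
    (x y : k) (hxy : x ≠ y) (hH : y - x + 1 ≠ 0) :
    (tauInv (x, y)).1 ≠ (tauInv (x, y)).2 ∧
    (tauInv (x, y)).2 - (tauInv (x, y)).1 + 1 ≠ 0 ∧
    tauInv (tauInv (x, y)) = (x, y) ∧
    pap (tauInv (x, y)) = pap (x, y) :=
  ⟨tauInv_fst_ne_snd hH hxy, tauInv_snd_sub_fst_add_one_ne_zero hH, tauInv_tauInv hH,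
    pap_tauInv hH⟩

/-- `τ` is an involution interchanging the two sheets of the double cover `π`. -/
theorem tau_involution {k : Type*} [Field k]
    (hchar2 : ringChar k ≠ 2) (hchar3 : ringChar k ≠ 3)
    (x y : k) (hxy : x ≠ y) (hH : y - x + 1 ≠ 0) :
    (tauInv (x, y)).1 ≠ (tauInv (x, y)).2 ∧
    (tauInv (x, y)).2 - (tauInv (x, y)).1 + 1 ≠ 0 ∧
    tauInv (tauInv (x, y)) = (x, y) ∧
    pap (tauInv (x, y)) = pap (x, y) :=
  tau_involution_general x y hxy hH
end

section
/- Let k be a field of characteristic different from 2 and 3, and let π(x,y) = (2y(y−x+2)/(x−y)², y²/(x−y)²) for x ≠ y. Let p, q ∈ k with q ≠ 0 and p² = 4q (so p ≠ 0). Then the unique point (x,y) ∈ k² with x ≠ y and π(x,y) = (p,q) is (x,y) = (2q/p + 1, 2q/p); in particular this point lies on the harmonic line x = y + 1. (This is the statement that the double cover π is ramified exactly over the balanced parabola.) -/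
section PappusSteiner

variable {k : Type*} [Field k] {x y p q : k}

theorem pap_eq_iff (hxy : x ≠ y) :
    pap (x, y) = (p, q) ↔ 2 * y * (y - x + 2) = p * (x - y) ^ 2 ∧ y ^ 2 = q * (x - y) ^ 2 := by
  have hd : (x - y) ^ 2 ≠ 0 := pow_ne_zero 2 (sub_ne_zero.mpr hxy)
  simp only [pap, Prod.mk.injEq, div_eq_iff hd]

theorem pap_add_one_self (y : k) : pap (y + 1, y) = (2 * y, y ^ 2) := by
  simp only [pap, add_sub_cancel_left, one_pow, div_one, Prod.mk.injEq, and_true]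
  ring

theorem ne_zero_of_sq_eq_four_mul (h2 : (2 : k) ≠ 0) (hq : q ≠ 0) (hpq : p ^ 2 = 4 * q) :
    p ≠ 0 := by
  rintro rfl
  have h4q : (2 * 2 : k) * q = 0 := by linear_combination -hpq
  exact hq ((mul_eq_zero.mp h4q).resolve_left (mul_ne_zero h2 h2))

theorem sub_eq_one_of_pap_eq_of_sq_eq_four_mul (h2 : (2 : k) ≠ 0) (hq : q ≠ 0)
    (hpq : p ^ 2 = 4 * q) (hxy : x ≠ y) (h : pap (x, y) = (p, q)) : x - y = 1 := by
  obtain ⟨hfst, hsnd⟩ := (pap_eq_iff hxy).mp h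
  have hy : y ^ 2 ≠ 0 := hsnd ▸ mul_ne_zero hq (pow_ne_zero 2 (sub_ne_zero.mpr hxy))
  have h16 : (2 * 2) ^ 2 * y ^ 2 * (1 - (x - y)) = 0 := by
    linear_combination (2 * y * (y - x + 2) + p * (x - y) ^ 2) * hfst + (x - y) ^ 4 * hpq
      - 4 * (x - y) ^ 2 * hsnd
  have h1 := (mul_eq_zero.mp h16).resolve_left (mul_ne_zero (pow_ne_zero 2 (mul_ne_zero h2 h2)) hy)
  linear_combination -h1

end PappusSteiner

theorem pap_ramified_over_balanced_general {k : Type*} [Field k]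
    (hchar2 : ringChar k ≠ 2)
    (p q : k) (hq : q ≠ 0) (hpq : p ^ 2 = 4 * q) :
    p ≠ 0 ∧
    (∀ x y : k, x ≠ y →
      (pap (x, y) = (p, q) ↔ (x, y) = (2 * q / p + 1, 2 * q / p))) := by
  have h2 : (2 : k) ≠ 0 := Ring.two_ne_zero hchar2
  have hp : p ≠ 0 := ne_zero_of_sq_eq_four_mul h2 hq hpq
  have hpoint : 2 * q / p = p / 2 := by
    rw [div_eq_div_iff hp h2]
    linear_combination -hpq
  refine ⟨hp, fun x y hxy => ?_⟩
  rw [hpoint]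
  constructor
  · intro h
    have hx : x = y + 1 := by
      linear_combination sub_eq_one_of_pap_eq_of_sq_eq_four_mul h2 hq hpq hxy h
    subst hx
    rw [pap_add_one_self, Prod.mk.injEq] at h
    have hy : y = p / 2 := by
      rw [eq_div_iff h2]
      linear_combination h.1
    rw [hy]
  · rintro ⟨⟩
    rw [pap_add_one_self, Prod.mk.injEq]
    constructor
    · exact mul_div_cancel₀ p h2
    · field_simp
      linear_combination hpq

/-- Over the balanced parabola `p² = 4q` (with `q ≠ 0`), the fiber of the double
cover `π` consists of the single point `(2q/p + 1, 2q/p)`, which lies on the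
harmonic line `x = y + 1`: the cover is ramified over the balanced parabola. -/
theorem pap_ramified_over_balanced {k : Type*} [Field k]
    (hchar2 : ringChar k ≠ 2) (hchar3 : ringChar k ≠ 3)
    (p q : k) (hq : q ≠ 0) (hpq : p ^ 2 = 4 * q) :
    p ≠ 0 ∧
    (∀ x y : k, x ≠ y →
      (pap (x, y) = (p, q) ↔ (x, y) = (2 * q / p + 1, 2 * q / p))) :=
  pap_ramified_over_balanced_general hchar2 p q hq hpq
end

section
/- Let π(x,y) = (2y(y−x+2)/(x−y)², y²/(x−y)²) for x ≠ y, over the field ℂ of complex numbers, and let τ(x,y) = ((2y−x)/(y−x+1), y/(y−x+1)). Let p, q ∈ ℂ with q ≠ 0 and p² ≠ 4q. Then the fiber {(x,y) ∈ ℂ² : x ≠ y and π(x,y) = (p,q)} consists of exactly two points, and the involution τ maps each of these two points to the other. (Hence π is a double cover away from the balanced parabola p² = 4q.) -/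
/-!
Parametrize the points with `x ≠ y` by `d = x - y ≠ 0` and `u = y / (x - y)`, i.e.
`(x, y) = (d (u + 1), d u)`. In these coordinates `π(d, u) = (2u(2 - d)/d, u²)` and
`τ(d, u) = (d / (d - 1), -u)`. Hence `π(d, u) = (p, t²)` means `u = ±t` and
`d (p + 2u) = 4u`: each square root `u` of `t²` gives exactly one point, and the two values
`d = 4u / (p + 2u)` for `u = ±t` satisfy `1/d + 1/d' = 1`, so `τ` swaps them.
-/

namespace PappusSteiner

variable {k : Type*} [Field k]

def ofDiffRatio (d u : k) : k × k :=
  (d * (u + 1), d * u)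

lemma ofDiffRatio_fst_sub_snd (d u : k) : (ofDiffRatio d u).1 - (ofDiffRatio d u).2 = d := by
  simp only [ofDiffRatio]; ring

lemma ofDiffRatio_ratio {d : k} (hd : d ≠ 0) (u : k) :
    (ofDiffRatio d u).2 / ((ofDiffRatio d u).1 - (ofDiffRatio d u).2) = u := by
  rw [ofDiffRatio_fst_sub_snd, ofDiffRatio, mul_div_cancel_left₀ u hd]

lemma ofDiffRatio_diff_ratio {z : k × k} (hz : z.1 ≠ z.2) :
    ofDiffRatio (z.1 - z.2) (z.2 / (z.1 - z.2)) = z := by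
  have hd : z.1 - z.2 ≠ 0 := sub_ne_zero.mpr hz
  ext
  · simp only [ofDiffRatio]; field_simp; ring
  · simp only [ofDiffRatio]; field_simp

lemma pap_ofDiffRatio {d : k} (hd : d ≠ 0) (u : k) :
    pap (ofDiffRatio d u) = (2 * u * (2 - d) / d, u ^ 2) := by
  rw [pap, ofDiffRatio_fst_sub_snd]
  simp only [ofDiffRatio]
  ext <;> field_simp
  ring

lemma tauInv_ofDiffRatio {d : k} (hd : d ≠ 1) (u : k) :
    tauInv (ofDiffRatio d u) = ofDiffRatio (d / (d - 1)) (-u) := by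
  have hd' : d - 1 ≠ 0 := sub_ne_zero.mpr hd
  have hden : (ofDiffRatio d u).2 - (ofDiffRatio d u).1 + 1 = -(d - 1) := by
    rw [← neg_sub, ofDiffRatio_fst_sub_snd]; ring
  rw [tauInv, hden]
  simp only [ofDiffRatio]
  ext <;> field_simp
  ring

lemma pap_ofDiffRatio_eq_iff {d : k} (hd : d ≠ 0) (u p q : k) :
    pap (ofDiffRatio d u) = (p, q) ↔ u ^ 2 = q ∧ d * (p + 2 * u) = 4 * u := by
  rw [pap_ofDiffRatio hd, Prod.mk.injEq, div_eq_iff hd, and_comm]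
  exact and_congr_right fun _ =>
    ⟨fun h => by linear_combination -h, fun h => by linear_combination -h⟩

def papFiberPoint (p t : k) : k × k :=
  ofDiffRatio (4 * t / (p + 2 * t)) t

lemma add_two_mul_ne_zero_of_sq_ne {p t : k} (h : p ^ 2 ≠ 4 * t ^ 2) : p + 2 * t ≠ 0 :=
  fun h' => h (by linear_combination (p - 2 * t) * h')

lemma tauInv_papFiberPoint {p t : k} (h : p ^ 2 ≠ 4 * t ^ 2) :
    tauInv (papFiberPoint p t) = papFiberPoint p (-t) := by
  have hp : p + 2 * t ≠ 0 := add_two_mul_ne_zero_of_sq_ne h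
  have hd : 4 * t / (p + 2 * t) ≠ 1 := by
    rw [Ne, div_eq_one_iff_eq hp]
    exact fun h' => h (by linear_combination -(p + 2 * t) * h')
  rw [papFiberPoint, tauInv_ofDiffRatio hd, papFiberPoint]
  congr 1
  rw [div_sub_one hp, div_div_div_cancel_right₀ hp, ← neg_div_neg_eq]
  congr 1 <;> ring

lemma eq_papFiberPoint_of_pap_eq {p t : k} (h : p ^ 2 ≠ 4 * t ^ 2) {z : k × k}
    (hz : z.1 ≠ z.2) (hpz : pap z = (p, t ^ 2)) :
    z = papFiberPoint p t ∨ z = papFiberPoint p (-t) := by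
  rw [← ofDiffRatio_diff_ratio hz] at hpz ⊢
  have hd : z.1 - z.2 ≠ 0 := sub_ne_zero.mpr hz
  generalize z.1 - z.2 = d, z.2 / (z.1 - z.2) = u at hd hpz ⊢
  obtain ⟨hu, hdu⟩ := (pap_ofDiffRatio_eq_iff hd _ _ _).mp hpz
  obtain rfl | rfl := sq_eq_sq_iff_eq_or_eq_neg.mp hu
  · left
    rw [papFiberPoint, eq_div_iff (add_two_mul_ne_zero_of_sq_ne h) |>.mpr hdu]
  · right
    rw [papFiberPoint, eq_div_iff (add_two_mul_ne_zero_of_sq_ne (by rwa [neg_sq])) |>.mpr hdu]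

variable [NeZero (2 : k)]

lemma four_mul_ne_zero {t : k} (ht : t ≠ 0) : 4 * t ≠ 0 := by
  have h4 : (4 : k) ≠ 0 := by
    have := mul_ne_zero (two_ne_zero (α := k)) two_ne_zero
    norm_num at this
    exact this
  exact mul_ne_zero h4 ht

lemma papFiberPoint_fst_ne_snd {p t : k} (ht : t ≠ 0) (hpt : p + 2 * t ≠ 0) :
    (papFiberPoint p t).1 ≠ (papFiberPoint p t).2 := by
  rw [← sub_ne_zero, papFiberPoint, ofDiffRatio_fst_sub_snd]
  exact div_ne_zero (four_mul_ne_zero ht) hpt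

lemma pap_papFiberPoint {p t : k} (ht : t ≠ 0) (hpt : p + 2 * t ≠ 0) :
    pap (papFiberPoint p t) = (p, t ^ 2) := by
  rw [papFiberPoint, pap_ofDiffRatio_eq_iff (div_ne_zero (four_mul_ne_zero ht) hpt)]
  exact ⟨rfl, div_mul_cancel₀ _ hpt⟩

lemma papFiberPoint_ne_neg {p t : k} (h : p ^ 2 ≠ 4 * t ^ 2) (ht : t ≠ 0) :
    papFiberPoint p t ≠ papFiberPoint p (-t) := by
  have hp : p + 2 * t ≠ 0 := add_two_mul_ne_zero_of_sq_ne h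
  have hm : p + 2 * -t ≠ 0 := add_two_mul_ne_zero_of_sq_ne (by rwa [neg_sq])
  intro heq
  have hratio := congrArg (fun z : k × k => z.2 / (z.1 - z.2)) heq
  simp only [papFiberPoint, ofDiffRatio_ratio (div_ne_zero (four_mul_ne_zero ht) hp),
    ofDiffRatio_ratio (div_ne_zero (four_mul_ne_zero (neg_ne_zero.mpr ht)) hm)] at hratio
  have h2t : 2 * t = 0 := by linear_combination hratio
  exact ht ((mul_eq_zero.mp h2t).resolve_left two_ne_zero)

lemma papFiber_eq {p t : k} (ht : t ≠ 0) (h : p ^ 2 ≠ 4 * t ^ 2) :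
    {z : k × k | z.1 ≠ z.2 ∧ pap z = (p, t ^ 2)} =
      {papFiberPoint p t, papFiberPoint p (-t)} := by
  have hp : p + 2 * t ≠ 0 := add_two_mul_ne_zero_of_sq_ne h
  have hm : p + 2 * -t ≠ 0 := add_two_mul_ne_zero_of_sq_ne (by rwa [neg_sq])
  ext z
  constructor
  · rintro ⟨hz, hpz⟩
    exact eq_papFiberPoint_of_pap_eq h hz hpz
  · rintro (rfl | rfl)
    · exact ⟨papFiberPoint_fst_ne_snd ht hp, pap_papFiberPoint ht hp⟩
    · have ht' : -t ≠ 0 := neg_ne_zero.mpr ht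
      exact ⟨papFiberPoint_fst_ne_snd ht' hm, by rw [pap_papFiberPoint ht' hm, neg_sq]⟩

end PappusSteiner

open PappusSteiner in
/-- Away from the balanced parabola `p² = 4q`, the fiber of `π` over `(p,q)` consists
of exactly two points, interchanged by the involution `τ`. -/
theorem pap_double_cover (p q : ℂ) (hq : q ≠ 0) (hpq : p ^ 2 ≠ 4 * q) :
    ∃ a b : ℂ × ℂ, a ≠ b ∧
      {z : ℂ × ℂ | z.1 ≠ z.2 ∧ pap z = (p, q)} = {a, b} ∧
      tauInv a = b ∧ tauInv b = a := by
  obtain ⟨s, rfl⟩ := IsAlgClosed.exists_pow_nat_eq q two_pos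
  have hs : s ≠ 0 := (pow_ne_zero_iff two_ne_zero).mp hq
  have hpq' : p ^ 2 ≠ 4 * (-s) ^ 2 := by rwa [neg_sq]
  refine ⟨papFiberPoint p s, papFiberPoint p (-s), papFiberPoint_ne_neg hpq hs,
    papFiber_eq hs hpq, tauInv_papFiberPoint hpq, ?_⟩
  simpa only [neg_neg] using tauInv_papFiberPoint hpq'
end

section
/- Let π(x,y) = (2y(y−x+2)/(x−y)², y²/(x−y)²) for x ≠ y, over the field ℚ of rational numbers. Then the only points (x,y) ∈ ℚ² with x ≠ y and π(x,y) = (x,y) are (2,1) and (12,16). That is, (2,1) and (12,16) are the only fixed points of the Pappus–Steiner map over ℚ. -/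
/-- The only fixed points of the Pappus–Steiner map over `ℚ` are `(2,1)` and `(12,16)`. -/
theorem pap_fixed_points (x y : ℚ) (hxy : x ≠ y) :
    pap (x, y) = (x, y) ↔ ((x, y) = ((2 : ℚ), (1 : ℚ)) ∨ (x, y) = ((12 : ℚ), (16 : ℚ))) := by
  have hd : x - y ≠ 0 := sub_ne_zero.mpr hxy
  constructor
  · intro h
    rw [pap, Prod.mk.injEq] at h
    obtain ⟨h1, h2⟩ := h
    rw [div_eq_iff (pow_ne_zero 2 hd)] at h1 h2
    -- h1 : 2*y*(y-x+2) = x*(x-y)^2, h2 : y^2 = y*(x-y)^2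
    rcases eq_or_ne y 0 with hy0 | hy0
    · exfalso
      subst hy0
      have hx3 : x ^ 3 = 0 := by linear_combination -h1
      exact hxy (by rw [pow_eq_zero_iff (by norm_num : 3 ≠ 0) |>.mp hx3])
    · have hy : y - (x - y) ^ 2 = 0 := by
        have := mul_left_cancel₀ hy0 (by ring_nf; ring_nf at h2; linarith : y * y = y * (x - y)^2)
        linarith
      have hx : 2 * y - 3 * x + 4 = 0 := by
        have hne : y * (x - y) ^ 2 ≠ 0 := mul_ne_zero hy0 (pow_ne_zero 2 hd)
        have h2' : (x - y) ^ 2 = y := by linarith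
        have : 2 * y * (y - x + 2) = x * y := by
          have := h1; rw [h2'] at this; exact this
        have := mul_right_cancel₀ hy0 (by ring_nf; ring_nf at this; linarith :
          (2 * (y - x + 2)) * y = x * y)
        linarith
      have h3 : (x - 2) * (x - 12) = 0 := by
        linear_combination (-4) * hy + (x - 2 * y + 6) * hx
      rcases mul_eq_zero.mp h3 with h | h
      · left
        have hx2 : x = 2 := by linarith
        have : y = 1 := by rw [hx2] at hx; linarith
        simp [hx2, this]
      · right
        have hx2 : x = 12 := by linarith
        have : y = 16 := by rw [hx2] at hx; linarith
        simp [hx2, this]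
  · rintro (h | h) <;> rw [Prod.mk.injEq] at h <;> obtain ⟨h1, h2⟩ := h <;>
      subst h1 <;> subst h2 <;> simp [pap] <;> norm_num
end

section
/- Let π(x,y) = (2y(y−x+2)/(x−y)², y²/(x−y)²) for x ≠ y, over the field ℚ of rational numbers. Then π(5,4) = (8,16) and π(8,16) = (5,4), so these two points form a 2-cycle. Moreover, if (x,y) ∈ ℚ² satisfies x ≠ y, the point (x',y') = π(x,y) satisfies x' ≠ y', π(π(x,y)) = (x,y), and π(x,y) ≠ (x,y), then (x,y) = (5,4) or (x,y) = (8,16). That is, the points of period exactly 2 of the Pappus–Steiner map over ℚ are exactly (5,4) and (8,16). -/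
/-- The points of period exactly `2` of the Pappus–Steiner map over `ℚ` are exactly
`(5,4)` and `(8,16)`, which are sent to each other by `π`. -/
theorem pap_period_two_points :
    pap (((5 : ℚ), (4 : ℚ))) = (8, 16) ∧
    pap (((8 : ℚ), (16 : ℚ))) = (5, 4) ∧
    (∀ x y : ℚ, x ≠ y →
      (pap (x, y)).1 ≠ (pap (x, y)).2 →
      pap (pap (x, y)) = (x, y) →
      pap (x, y) ≠ (x, y) →
      ((x, y) = ((5 : ℚ), (4 : ℚ)) ∨ (x, y) = ((8 : ℚ), (16 : ℚ)))) := by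
  refine ⟨by norm_num [pap, Prod.ext_iff], by norm_num [pap, Prod.ext_iff], ?_⟩
  intro x y hxy h2 h3 h4
  have hd : x - y ≠ 0 := sub_ne_zero.mpr hxy
  simp only [pap] at h2
  have hyt : y * (y - 2*x + 4) ≠ 0 := by
    intro h
    apply h2
    field_simp
    linear_combination h
  have hy : y ≠ 0 := fun h => hyt (by rw [h]; ring)
  have hT : y - 2*x + 4 ≠ 0 := fun h => hyt (by rw [h]; ring)
  have hne : 2*y*(y-x+2) - y^2 ≠ 0 := fun h => hyt (by linear_combination h)
  have hE : (2*y*(y-x+2)/(x-y)^2 - y^2/(x-y)^2) ≠ 0 := sub_ne_zero.mpr h2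
  have hpp : pap (pap (x, y)) =
      (2*(2*(x-y)^2 - y*(y-2*x+4)) / (y-2*x+4)^2, y^2/(y-2*x+4)^2) := by
    simp only [pap]
    refine Prod.ext ?_ ?_ <;> simp only <;>
      rw [div_eq_div_iff (pow_ne_zero 2 hE) (pow_ne_zero 2 hT)] <;>
      field_simp <;> ring
  rw [hpp, Prod.ext_iff] at h3
  obtain ⟨eqA, eqB⟩ := h3
  simp only at eqA eqB
  rw [div_eq_iff (pow_ne_zero 2 hT)] at eqA eqB
  have hy2 : y = (y - 2*x + 4)^2 := mul_left_cancel₀ hy (by linear_combination eqB)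
  obtain ⟨t, ht2, hx2⟩ : ∃ t : ℚ, y = t^2 ∧ x = (t^2 - t + 4)/2 :=
    ⟨y - 2*x + 4, hy2, by linear_combination hy2/2⟩
  subst ht2
  subst hx2
  have hq : (t - 4) * (t - 1) * (t + 2) * (t + 4) = 0 := by
    linear_combination 2 * eqA
  rcases mul_eq_zero.mp hq with hq' | h4'
  · rcases mul_eq_zero.mp hq' with hq'' | h2'
    · rcases mul_eq_zero.mp hq'' with h4'' | h1''
      · right
        have : t = 4 := by linarith
        subst this
        norm_num
      · exfalso
        have : t = 1 := by linarith
        subst this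
        apply h4
        norm_num [pap, Prod.ext_iff]
    · left
      have : t = -2 := by linarith
      subst this
      norm_num
  · exfalso
    have : t = -4 := by linarith
    subst this
    apply h4
    norm_num [pap, Prod.ext_iff]
end

section
/- Let π(x,y) = (2y(y−x+2)/(x−y)², y²/(x−y)²) for x ≠ y, over the field ℚ of rational numbers. Suppose (x,y) ∈ ℚ² is such that the three points z₀ = (x,y), z₁ = π(z₀), z₂ = π(z₁) each have distinct coordinates (so π is defined at each), and π(z₂) = z₀. Then π(z₀) = z₀ (so z₀ is one of the fixed points). In other words, the Pappus–Steiner map has no points of period exactly 3 over ℚ. -/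
open Polynomial

theorem Polynomial.aeval_ne_zero_of_monic_of_forall_eval_map_ne_zero {p : ℤ[X]} (hp : p.Monic)
    {n : ℕ} (hn : ∀ z : ZMod n, (p.map (Int.castRingHom (ZMod n))).eval z ≠ 0) (t : ℚ) :
    aeval t p ≠ 0 := by
  intro ht
  obtain ⟨m, rfl⟩ := isInteger_of_is_root_of_monic hp ht
  have hm : p.eval m = 0 := by
    rwa [aeval_algebraMap_apply_eq_algebraMap_eval, FaithfulSMul.algebraMap_eq_zero_iff] at ht
  apply hn m
  simp [eval_intCast_map, hm]

lemma rat_sextic_ne_zero (x : ℚ) :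
    x ^ 6 - 132 * x ^ 5 + 5584 * x ^ 4 - 101952 * x ^ 3 + 838912 * x ^ 2 - 2964480 * x + 3682304
      ≠ 0 := by
  have hmonic : (X ^ 6 - 132 * X ^ 5 + 5584 * X ^ 4 - 101952 * X ^ 3 + 838912 * X ^ 2
      - 2964480 * X + 3682304 : ℤ[X]).Monic := by monicity!
  have := aeval_ne_zero_of_monic_of_forall_eval_map_ne_zero hmonic (n := 3) (by
    simp only [Polynomial.map_add, Polynomial.map_sub, Polynomial.map_pow, Polynomial.map_mul,
      Polynomial.map_ofNat, map_X, eval_add, eval_sub, eval_pow, eval_mul, eval_ofNat, eval_X]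
    decide) x
  simpa [map_ofNat] using this

variable {k : Type*} [Field k]

lemma pap_div {a b c : k} (hc : c ≠ 0) (hab : a ≠ b) :
    pap (a / c, b / c) = (2 * b * (b - a + 2 * c) / (a - b) ^ 2, b ^ 2 / (a - b) ^ 2) := by
  have hab' : a - b ≠ 0 := sub_ne_zero.2 hab
  simp only [pap, Prod.mk.injEq]
  constructor <;> field_simp

/-- `π³(x, y) = (x, y)` with denominators cleared, divided by `y⁴` in the first coordinate
(`papPeriodThreeFst`) and by `y⁵` in the second (`papPeriodThreeSnd`). -/
def papPeriodThreeFst (x y : k) : k :=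
  64*y^2 + 48*y^3 + 2*y^4 - 128*x*y^2 + 8*x*y^3 - x*y^4 - 56*x^2*y^2 + 8*x^2*y^3 + 64*x^3*y
    - 24*x^3*y^2 + 32*x^4*y - 16*x^5

def papPeriodThreeSnd (x y : k) : k :=
  -64*y^2 + 17*y^3 - y^4 - 64*x*y^2 + 8*x*y^3 + 64*x^2*y - 24*x^2*y^2 + 32*x^3*y - 16*x^4

lemma pap_period_three_equations {x y : k} (h0 : x ≠ y)
    (h1 : (pap (x, y)).1 ≠ (pap (x, y)).2)
    (h2 : (pap (pap (x, y))).1 ≠ (pap (pap (x, y))).2)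
    (h3 : pap (pap (pap (x, y))) = (x, y)) :
    y ≠ 0 ∧ papPeriodThreeFst x y = 0 ∧ papPeriodThreeSnd x y = 0 := by
  set a₁ := 2 * y * (y - x + 2)
  set b₁ := y ^ 2
  set c₁ := (x - y) ^ 2
  have e₁ : pap (x, y) = (a₁ / c₁, b₁ / c₁) := rfl
  have hc₁ : c₁ ≠ 0 := pow_ne_zero 2 (sub_ne_zero.2 h0)
  have hab₁ : a₁ ≠ b₁ := by rw [e₁] at h1; exact ne_of_apply_ne (· / c₁) h1
  have e₂ := e₁ ▸ pap_div hc₁ hab₁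
  set a₂ := 2 * b₁ * (b₁ - a₁ + 2 * c₁)
  set b₂ := b₁ ^ 2
  set c₂ := (a₁ - b₁) ^ 2
  have hc₂ : c₂ ≠ 0 := pow_ne_zero 2 (sub_ne_zero.2 hab₁)
  have hab₂ : a₂ ≠ b₂ := by rw [e₂] at h2; exact ne_of_apply_ne (· / c₂) h2
  have e₃ := e₂ ▸ pap_div hc₂ hab₂
  set c₃ := (a₂ - b₂) ^ 2
  have hc₃ : c₃ ≠ 0 := pow_ne_zero 2 (sub_ne_zero.2 hab₂)
  rw [e₃, Prod.mk.injEq, div_eq_iff hc₃, div_eq_iff hc₃] at h3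
  have hy : y ≠ 0 := by rintro rfl; exact hab₁ (by simp [a₁, b₁])
  refine ⟨hy, ?_, ?_⟩ <;> simp only [papPeriodThreeFst, papPeriodThreeSnd]
  · refine (mul_eq_zero.1 ?_).resolve_left (pow_ne_zero 4 hy)
    linear_combination h3.1
  · refine (mul_eq_zero.1 ?_).resolve_left (pow_ne_zero 5 hy)
    linear_combination h3.2

section CharZero

variable [CharZero k] {x y : k}

lemma pap_period_three_eliminant (hP : papPeriodThreeFst x y = 0)
    (hQ : papPeriodThreeSnd x y = 0) :
    x ^ 13 * (x - 2) * (x - 12) * (x ^ 6 - 132 * x ^ 5 + 5584 * x ^ 4 - 101952 * x ^ 3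
      + 838912 * x ^ 2 - 2964480 * x + 3682304) = 0 := by
  unfold papPeriodThreeFst at hP
  unfold papPeriodThreeSnd at hQ
  -- certificate found by computer algebra
  linear_combination ((-22093824)*x^4*y^2 + 5868672*x^4*y^3 + (-345216)*x^4*y^4 +
      (-57700352)*x^5*y^2 + 12219712*x^5*y^3 + (-556352)*x^5*y^4 + 22093824*x^6*y +
      (-100759552)*x^6*y^2 + 19556336*x^6*y^3 + (-888560)*x^6*y^4 + 24559616*x^7*y +
      (-46518144)*x^7*y^2 + 2026248*x^7*y^3 + 278648*x^7*y^4 + (-5523456)*x^8 + 50111488*x^8*y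
      + (-271488)*x^8*y^2 + (-2215590)*x^8*y^3 + (-3066)*x^8*y^4 + 7668736*x^9 + 4762912*x^9*y
      + 2656392*x^9*y^2 + 912821*x^9*y^3 + (-49085)*x^9*y^4 + (-4082432)*x^10 +
      (-8585360)*x^10*y + (-5740343/2)*x^10*y^2 + (2666169/8)*x^10*y^3 + (9523/8)*x^10*y^4 +
      1072256*x^11 + 1931208*x^11*y + (-2916449/4)*x^11*y^2 + (-43721/2)*x^11*y^3 +
      (2327/4)*x^11*y^4 + (-150016)*x^12 + 730316*x^12*y + (972441/16)*x^12*y^2 +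
      (-102567/32)*x^12*y^3 + (-987/32)*x^12*y^4 + 11456*x^13 + (-56227)*x^13*y +
      (212673/32)*x^13*y^2 + (6381/32)*x^13*y^3 + (5/16)*x^13*y^4 + (-466)*x^14 +
      (-5005)*x^14*y + (-14253/32)*x^14*y^2 + (-67/32)*x^14*y^3 + (73/8)*x^15 +
      (2757/8)*x^15*y + (19/4)*x^15*y^2 + (-1/16)*x^16 + (-59/16)*x^16*y) * hP +
      ((-22093824)*x^4*y + (-16570368)*x^4*y^2 + (-690432)*x^4*y^3 + 8581120*x^5*y +
      (-29466624)*x^5*y^2 + (-767488)*x^5*y^3 + 33677312*x^6*y + (-49863424)*x^6*y^2 +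
      (-1220768)*x^6*y^3 + (-44187648)*x^7 + 154439680*x^7*y + 1125376*x^7*y^2 +
      1445856*x^7*y^3 + (-4931584)*x^8 + 22637568*x^8*y + (-4758304)*x^8*y^2 +
      (-284780)*x^8*y^3 + (-51103744)*x^9 + 2314304*x^9*y + (-5200)*x^9*y^2 + (-95104)*x^9*y^3
      + (-8638752)*x^10 + (-1761168)*x^10*y + (-492263)*x^10*y^2 + (205863/4)*x^10*y^3 +
      10129808*x^11 + 2634640*x^11*y + (-320956)*x^11*y^2 + (-215/8)*x^11*y^3 +
      (-2185416)*x^12 + 752000*x^12*y + (135945/8)*x^12*y^2 + (-10295/16)*x^12*y^3 +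
      (-709268)*x^13 + (-61829)*x^13*y + (13655/4)*x^13*y^2 + (1007/32)*x^13*y^3 +
      (110663/2)*x^14 + (-6624)*x^14*y + (-6445/32)*x^14*y^2 + (-5/16)*x^14*y^3 + 5023*x^15 +
      (1781/4)*x^15*y + (67/32)*x^15*y^2 + (-1379/4)*x^16 + (-19/4)*x^16*y + (59/16)*x^17) * y
      * hQ

lemma pap_period_three_cases (hy : y ≠ 0) (hP : papPeriodThreeFst x y = 0)
    (hQ : papPeriodThreeSnd x y = 0) :
    (x = 2 ∧ y = 1) ∨ (x = 12 ∧ y = 16) ∨ x ^ 6 - 132 * x ^ 5 + 5584 * x ^ 4 - 101952 * x ^ 3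
      + 838912 * x ^ 2 - 2964480 * x + 3682304 = 0 := by
  have h := pap_period_three_eliminant hP hQ
  simp only [mul_eq_zero, pow_eq_zero_iff, ne_eq, OfNat.ofNat_ne_zero, not_false_eq_true,
    sub_eq_zero] at h
  unfold papPeriodThreeFst at hP
  unfold papPeriodThreeSnd at hQ
  rcases h with ((rfl | rfl) | rfl) | hS
  · refine absurd (pow_eq_zero_iff two_ne_zero |>.1 ?_) hy
    linear_combination ((1/64) + (-2323/690432)*y + (127/690432)*y^2) * hP + ((721/86304) +
        (127/345216)*y) * y * hQ
  · refine .inl ⟨rfl, ?_⟩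
    linear_combination ((1/512) + (333/16640)*y + (-1507/532480)*y^2 + (49/532480)*y^3) * hP
        + ((-601/16640) + (147/16640)*y) * y * hQ
  · refine .inr (.inl ⟨rfl, ?_⟩)
    linear_combination ((1/248832) + (-923899/2911334400)*y + (26589733/1676928614400)*y^2 +
        (-314101/1676928614400)*y^3) * hP + ((3701771/970444800) +
        (-19877381/104808038400)*y + (314101/167692861440)*y^2) * y * hQ
  · exact .inr (.inr hS)

end CharZero

/-- The Pappus–Steiner map has no points of period exactly `3` over `ℚ`: any
`3`-periodic point (with all iterates defined) is a fixed point. -/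
theorem pap_no_period_three (x y : ℚ)
    (h0 : x ≠ y)
    (h1 : (pap (x, y)).1 ≠ (pap (x, y)).2)
    (h2 : (pap (pap (x, y))).1 ≠ (pap (pap (x, y))).2)
    (h3 : pap (pap (pap (x, y))) = (x, y)) :
    pap (x, y) = (x, y) := by
  obtain ⟨hy, hP, hQ⟩ := pap_period_three_equations h0 h1 h2 h3
  rcases pap_period_three_cases hy hP hQ with ⟨rfl, rfl⟩ | ⟨rfl, rfl⟩ | hS
  · norm_num [pap]
  · norm_num [pap]
  · exact absurd hS (rat_sextic_ne_zero x)
end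

section
/- Let π(x,y) = (2y(y−x+2)/(x−y)², y²/(x−y)²) for x ≠ y, over the field ℚ of rational numbers. Suppose (x,y) ∈ ℚ² is such that the four points z₀ = (x,y), z₁ = π(z₀), z₂ = π(z₁), z₃ = π(z₂) each have distinct coordinates (so π is defined at each), and π(z₃) = z₀. Then z₂ = z₀ (so z₀ has period 1 or 2). In other words, the Pappus–Steiner map has no points of period exactly 4 over ℚ. -/
private lemma pap_div_s10 {A B D : ℚ} (hD : D ≠ 0) (hAB : A - B ≠ 0) :
    pap (A/D, B/D) = (2*B*(B-A+2*D)/(A-B)^2, B^2/(A-B)^2) := by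
  have h2 : (A - B)^2 ≠ 0 := pow_ne_zero _ hAB
  simp only [pap, Prod.mk.injEq]
  constructor <;> (field_simp; try ring)

private lemma qsq (p : ℕ) (hp : p.Prime) (q : ℚ) : q^2 ≠ p := by
  intro h
  refine hp.irrational_sqrt ⟨|q|, ?_⟩
  have h1 : (|q|)^2 = (p:ℚ) := by rwa [sq_abs]
  have h2 : ((|q| : ℚ) : ℝ)^2 = p := by exact_mod_cast congrArg (Rat.cast (K := ℝ)) h1
  rw [show ((p:ℝ)) = (((|q|:ℚ)):ℝ)^2 from h2.symm, Real.sqrt_sq (by positivity)]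

private lemma div_congr {a b c d : ℚ} (h1 : a = c) (h2 : b = d) : a / b = c / d := by
  rw [h1, h2]

set_option maxHeartbeats 4000000 in
/-- The Pappus–Steiner map has no points of period exactly `4` over `ℚ`: any
`4`-periodic point (with all iterates defined) has period `1` or `2`. -/
theorem pap_no_period_four (x y : ℚ)
    (h0 : x ≠ y)
    (h1 : (pap (x, y)).1 ≠ (pap (x, y)).2)
    (h2 : (pap (pap (x, y))).1 ≠ (pap (pap (x, y))).2)
    (h3 : (pap (pap (pap (x, y)))).1 ≠ (pap (pap (pap (x, y)))).2)
    (h4 : pap (pap (pap (pap (x, y)))) = (x, y)) :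
    pap (pap (x, y)) = (x, y) := by
  have hd0 : x - y ≠ 0 := sub_ne_zero.mpr h0
  have hD1 : (y^2 + (-2)*x*y + x^2) ≠ 0 := by
    have := pow_ne_zero 2 hd0
    rwa [show (x-y)^2 = (y^2 + (-2)*x*y + x^2) from by ring] at this
  have P1 : pap (x, y) = ((4*y + 2*y^2 + (-2)*x*y)/(y^2 + (-2)*x*y + x^2), y^2/(y^2 + (-2)*x*y + x^2)) := by
    rw [show pap (x, y) = (2*y*(y-x+2)/(x-y)^2, y^2/(x-y)^2) from rfl, Prod.mk.injEq]
    exact ⟨div_congr (by ring) (by ring), div_congr (by ring) (by ring)⟩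
  have hAB1 : (4*y + 2*y^2 + (-2)*x*y) - y^2 ≠ 0 := by
    intro h
    apply h1
    rw [P1]
    show (4*y + 2*y^2 + (-2)*x*y)/(y^2 + (-2)*x*y + x^2) = y^2/(y^2 + (-2)*x*y + x^2)
    rw [show (4*y + 2*y^2 + (-2)*x*y) = y^2 from by linarith]
  have hD2 : (16*y^2 + 8*y^3 + y^4 + (-16)*x*y^2 + (-4)*x*y^3 + 4*x^2*y^2) ≠ 0 := by
    have := pow_ne_zero 2 hAB1
    rwa [show ((4*y + 2*y^2 + (-2)*x*y) - y^2)^2 = (16*y^2 + 8*y^3 + y^4 + (-16)*x*y^2 + (-4)*x*y^3 + 4*x^2*y^2) from by ring] at this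
  have P2 : pap (pap (x, y)) = (((-8)*y^3 + 2*y^4 + (-4)*x*y^3 + 4*x^2*y^2)/(16*y^2 + 8*y^3 + y^4 + (-16)*x*y^2 + (-4)*x*y^3 + 4*x^2*y^2), y^4/(16*y^2 + 8*y^3 + y^4 + (-16)*x*y^2 + (-4)*x*y^3 + 4*x^2*y^2)) := by
    rw [P1, pap_div_s10 hD1 hAB1, Prod.mk.injEq]
    exact ⟨div_congr (by ring) (by ring), div_congr (by ring) (by ring)⟩
  have hAB2 : ((-8)*y^3 + 2*y^4 + (-4)*x*y^3 + 4*x^2*y^2) - y^4 ≠ 0 := by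
    intro h
    apply h2
    rw [P2]
    show ((-8)*y^3 + 2*y^4 + (-4)*x*y^3 + 4*x^2*y^2)/(16*y^2 + 8*y^3 + y^4 + (-16)*x*y^2 + (-4)*x*y^3 + 4*x^2*y^2) = y^4/(16*y^2 + 8*y^3 + y^4 + (-16)*x*y^2 + (-4)*x*y^3 + 4*x^2*y^2)
    rw [show ((-8)*y^3 + 2*y^4 + (-4)*x*y^3 + 4*x^2*y^2) = y^4 from by linarith]
  have hD3 : (64*y^6 + (-16)*y^7 + y^8 + 64*x*y^6 + (-8)*x*y^7 + (-64)*x^2*y^5 + 24*x^2*y^6 + (-32)*x^3*y^5 + 16*x^4*y^4) ≠ 0 := by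
    have := pow_ne_zero 2 hAB2
    rwa [show (((-8)*y^3 + 2*y^4 + (-4)*x*y^3 + 4*x^2*y^2) - y^4)^2 = (64*y^6 + (-16)*y^7 + y^8 + 64*x*y^6 + (-8)*x*y^7 + (-64)*x^2*y^5 + 24*x^2*y^6 + (-32)*x^3*y^5 + 16*x^4*y^4) from by ring] at this
  have P3 : pap (pap (pap (x, y))) = ((64*y^6 + 48*y^7 + 2*y^8 + (-64)*x*y^6 + (-8)*x*y^7 + 8*x^2*y^6)/(64*y^6 + (-16)*y^7 + y^8 + 64*x*y^6 + (-8)*x*y^7 + (-64)*x^2*y^5 + 24*x^2*y^6 + (-32)*x^3*y^5 + 16*x^4*y^4), y^8/(64*y^6 + (-16)*y^7 + y^8 + 64*x*y^6 + (-8)*x*y^7 + (-64)*x^2*y^5 + 24*x^2*y^6 + (-32)*x^3*y^5 + 16*x^4*y^4)) := by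
    rw [P2, pap_div_s10 hD2 hAB2, Prod.mk.injEq]
    exact ⟨div_congr (by ring) (by ring), div_congr (by ring) (by ring)⟩
  have hAB3 : (64*y^6 + 48*y^7 + 2*y^8 + (-64)*x*y^6 + (-8)*x*y^7 + 8*x^2*y^6) - y^8 ≠ 0 := by
    intro h
    apply h3
    rw [P3]
    show (64*y^6 + 48*y^7 + 2*y^8 + (-64)*x*y^6 + (-8)*x*y^7 + 8*x^2*y^6)/(64*y^6 + (-16)*y^7 + y^8 + 64*x*y^6 + (-8)*x*y^7 + (-64)*x^2*y^5 + 24*x^2*y^6 + (-32)*x^3*y^5 + 16*x^4*y^4) = y^8/(64*y^6 + (-16)*y^7 + y^8 + 64*x*y^6 + (-8)*x*y^7 + (-64)*x^2*y^5 + 24*x^2*y^6 + (-32)*x^3*y^5 + 16*x^4*y^4)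
    rw [show (64*y^6 + 48*y^7 + 2*y^8 + (-64)*x*y^6 + (-8)*x*y^7 + 8*x^2*y^6) = y^8 from by linarith]
  have hD4 : (4096*y^12 + 6144*y^13 + 2432*y^14 + 96*y^15 + y^16 + (-8192)*x*y^12 + (-7168)*x*y^13 + (-896)*x*y^14 + (-16)*x*y^15 + 5120*x^2*y^12 + 1792*x^2*y^13 + 80*x^2*y^14 + (-1024)*x^3*y^12 + (-128)*x^3*y^13 + 64*x^4*y^12) ≠ 0 := by
    have := pow_ne_zero 2 hAB3
    rwa [show ((64*y^6 + 48*y^7 + 2*y^8 + (-64)*x*y^6 + (-8)*x*y^7 + 8*x^2*y^6) - y^8)^2 = (4096*y^12 + 6144*y^13 + 2432*y^14 + 96*y^15 + y^16 + (-8192)*x*y^12 + (-7168)*x*y^13 + (-896)*x*y^14 + (-16)*x*y^15 + 5120*x^2*y^12 + 1792*x^2*y^13 + 80*x^2*y^14 + (-1024)*x^3*y^12 + (-128)*x^3*y^13 + 64*x^4*y^12) from by ring] at this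
  have P4 : pap (pap (pap (pap (x, y)))) = ((128*y^14 + (-160)*y^15 + 2*y^16 + 384*x*y^14 + (-16)*x*y^15 + (-256)*x^2*y^13 + 80*x^2*y^14 + (-128)*x^3*y^13 + 64*x^4*y^12)/(4096*y^12 + 6144*y^13 + 2432*y^14 + 96*y^15 + y^16 + (-8192)*x*y^12 + (-7168)*x*y^13 + (-896)*x*y^14 + (-16)*x*y^15 + 5120*x^2*y^12 + 1792*x^2*y^13 + 80*x^2*y^14 + (-1024)*x^3*y^12 + (-128)*x^3*y^13 + 64*x^4*y^12), y^16/(4096*y^12 + 6144*y^13 + 2432*y^14 + 96*y^15 + y^16 + (-8192)*x*y^12 + (-7168)*x*y^13 + (-896)*x*y^14 + (-16)*x*y^15 + 5120*x^2*y^12 + 1792*x^2*y^13 + 80*x^2*y^14 + (-1024)*x^3*y^12 + (-128)*x^3*y^13 + 64*x^4*y^12)) := by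
    rw [P3, pap_div_s10 hD3 hAB3, Prod.mk.injEq]
    exact ⟨div_congr (by ring) (by ring), div_congr (by ring) (by ring)⟩
  rw [P4, Prod.mk.injEq] at h4
  obtain ⟨hX, hY⟩ := h4
  have hF : (128*y^14 + (-160)*y^15 + 2*y^16 + 384*x*y^14 + (-16)*x*y^15 + (-256)*x^2*y^13 + 80*x^2*y^14 + (-128)*x^3*y^13 + 64*x^4*y^12) = x * (4096*y^12 + 6144*y^13 + 2432*y^14 + 96*y^15 + y^16 + (-8192)*x*y^12 + (-7168)*x*y^13 + (-896)*x*y^14 + (-16)*x*y^15 + 5120*x^2*y^12 + 1792*x^2*y^13 + 80*x^2*y^14 + (-1024)*x^3*y^12 + (-128)*x^3*y^13 + 64*x^4*y^12) := (div_eq_iff hD4).mp hX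
  have hG : (y:ℚ)^16 = y * (4096*y^12 + 6144*y^13 + 2432*y^14 + 96*y^15 + y^16 + (-8192)*x*y^12 + (-7168)*x*y^13 + (-896)*x*y^14 + (-16)*x*y^15 + 5120*x^2*y^12 + 1792*x^2*y^13 + 80*x^2*y^14 + (-1024)*x^3*y^12 + (-128)*x^3*y^13 + 64*x^4*y^12) := (div_eq_iff hD4).mp hY
  have hy0 : y ≠ 0 := by
    intro h
    apply h1
    rw [P1]
    show (4*y + 2*y^2 + (-2)*x*y)/(y^2 + (-2)*x*y + x^2) = y^2/(y^2 + (-2)*x*y + x^2)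
    subst h
    norm_num
  have hf : (128*y^2 + (-160)*y^3 + 2*y^4 + (-4096)*x + (-6144)*x*y + (-2048)*x*y^2 + (-112)*x*y^3 + (-1)*x*y^4 + 8192*x^2 + 6912*x^2*y + 976*x^2*y^2 + 16*x^2*y^3 + (-5120)*x^3 + (-1920)*x^3*y + (-80)*x^3*y^2 + 1088*x^4 + 128*x^4*y + (-64)*x^5) = 0 := by
    have h' : (128*y^2 + (-160)*y^3 + 2*y^4 + (-4096)*x + (-6144)*x*y + (-2048)*x*y^2 + (-112)*x*y^3 + (-1)*x*y^4 + 8192*x^2 + 6912*x^2*y + 976*x^2*y^2 + 16*x^2*y^3 + (-5120)*x^3 + (-1920)*x^3*y + (-80)*x^3*y^2 + 1088*x^4 + 128*x^4*y + (-64)*x^5) * y^12 = 0 := by linear_combination hF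
    rcases mul_eq_zero.mp h' with h'' | h''
    · exact h''
    · exact absurd h'' (pow_ne_zero _ hy0)
  have hg : ((-4096) + (-6144)*y + (-2432)*y^2 + (-95)*y^3 + (-1)*y^4 + 8192*x + 7168*x*y + 896*x*y^2 + 16*x*y^3 + (-5120)*x^2 + (-1792)*x^2*y + (-80)*x^2*y^2 + 1024*x^3 + 128*x^3*y + (-64)*x^4) = 0 := by
    have h' : ((-4096) + (-6144)*y + (-2432)*y^2 + (-95)*y^3 + (-1)*y^4 + 8192*x + 7168*x*y + 896*x*y^2 + 16*x*y^3 + (-5120)*x^2 + (-1792)*x^2*y + (-80)*x^2*y^2 + 1024*x^3 + 128*x^3*y + (-64)*x^4) * y^13 = 0 := by linear_combination hG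
    rcases mul_eq_zero.mp h' with h'' | h''
    · exact h''
    · exact absurd h'' (pow_ne_zero _ hy0)
  have hL : (y-1)*((y-4)*((y-16)*((y^2-12*y+16)*((y^2-112*y+256)*((y^2-48*y+256)*
      (y^4-208*y^3+10240*y^2-53248*y+65536)))))) = 0 := by
    linear_combination ((-243739394048) + (-16106127360)*y + (-771751936)*y^2 + 7009206272*y^3 + (-403701760)*y^4 + (-8790016)*y^5 + (-1784768)*y^6 + 15168*y^7 + (-112)*y^8 + 234075717632*x + (-33554432000)*x*y + (-2147483648)*x*y^2 + (-1815871488)*x*y^3 + 161677312*x*y^4 + 4317184*x*y^5 + 136256*x*y^6 + (-2304)*x*y^7 + 16*x*y^8 + (-52881784832)*x^2 + 11676942336*x^2*y + 394264576*x^2*y^2 + 83165184*x^2*y^3 + (-17825792)*x^2*y^4 + (-204800)*x^2*y^5 + 7232*x^2*y^6 + (-64)*x^2*y^7 + 3489660928*x^3 + (-939524096)*x^3*y + (-8388608)*x^3*y^2 + 4521984*x^3*y^3 + 327680*x^3*y^4 + (-8192)*x^3*y^5 + 64*x^3*y^6) * hf + (1073741824 + (-5368709120)*y + 5268045824*y^2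 + (-71827456)*y^3 + (-321912832)*y^4 + 15982592*y^5 + 1572928*y^6 + (-37056)*y^7 + 272*y^8 + (-1)*y^9 + 245886877696*x + 4026531840*x*y + 3456106496*x*y^2 + (-6698565632)*x*y^3 + 337838080*x*y^4 + 8388608*x*y^5 + 2048000*x*y^6 + (-18496)*x*y^7 + 128*x*y^8 + (-231122927616)*x^2 + 30198988800*x^2*y + 2407530496*x^2*y^2 + 1971388416*x^2*y^3 + (-174260224)*x^2*y^4 + (-4653056)*x^2*y^5 + (-128000)*x^2*y^6 + 2240*x^2*y^7 + (-16)*x^2*y^8 + 56371445760*x^3 + (-12616466432)*x^3*y + (-402653184)*x^3*y^2 + (-78643200)*x^3*y^3 + 18153472*x^3*y^4 + 196608*x^3*y^5 + (-7168)*x^3*y^6 + 64*x^3*y^7 + (-3489660928)*x^4 + 939524096*x^4*y + 8388608*x^4*y^2 + (-4521984)*x^4*y^3 + (-327680)*x^4*y^4 + 8192*x^4*y^5 + (-64)*x^4*y^6) * hg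
  rcases mul_eq_zero.mp hL with h | hL1
  · have hy : y = 1 := by linarith
    subst hy
    have hx : x = 2 := by linear_combination ((100857/10471175) + (-1627136/596856975)*x + (115712/596856975)*x^2) * hf + ((15997/119371395) + (-1841531/198952325)*x + (1742848/596856975)*x^2 + (-115712/596856975)*x^3) * hg
    subst hx
    norm_num [pap]
  rcases mul_eq_zero.mp hL1 with h | hL2
  · have hy : y = 4 := by linarith
    subst hy
    have hx : x = 5 := by linear_combination ((499/832) + (-70/429)*x + (19/1716)*x^2) * hf + ((-1709/27456) + (-5361/9152)*x + (23/132)*x^2 + (-19/1716)*x^3) * hg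
    subst hx
    norm_num [pap]
  rcases mul_eq_zero.mp hL2 with h | hL3
  · have hy : y = 16 := by linarith
    subst hy
    have hx : (x-8)*(x-12) = 0 := by linear_combination ((11/5120) + (-1/5120)*x) * hf + ((-1/1024) + (-3/1280)*x + (1/5120)*x^2) * hg
    rcases mul_eq_zero.mp hx with h' | h'
    · have hx8 : x = 8 := by linarith
      subst hx8
      norm_num [pap]
    · have hx12 : x = 12 := by linarith
      subst hx12
      norm_num [pap]
  rcases mul_eq_zero.mp hL3 with h | hL4
  · exact absurd (show ((y-6)/2)^2 = ((5:ℕ):ℚ) by push_cast; linear_combination h/4)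
      (qsq 5 (by norm_num) _)
  rcases mul_eq_zero.mp hL4 with h | hL5
  · exact absurd (show ((y-56)/24)^2 = ((5:ℕ):ℚ) by push_cast; linear_combination h/576)
      (qsq 5 (by norm_num) _)
  rcases mul_eq_zero.mp hL5 with h | h
  · exact absurd (show ((y-24)/8)^2 = ((5:ℕ):ℚ) by push_cast; linear_combination h/64)
      (qsq 5 (by norm_num) _)
  · refine absurd (show ((y^2-104*y+256)/(8*y))^2 = ((17:ℕ):ℚ) from ?_) (qsq 17 (by norm_num) _)
    rw [div_pow, div_eq_iff (pow_ne_zero 2 (by intro hh; exact hy0 (by linarith)))]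
    push_cast
    linear_combination h
end

section
/- Let p be a prime number with p ∉ {2, 13, 31}. Then the cubic polynomial u(X) = X³ − 84X² + 896X − 1984 has a root in the finite field 𝔽_p = ZMod p if and only if p mod 13 ∈ {1, 5, 8, 12}. -/
set_option maxHeartbeats 1000000

private lemma no_root_aux {K : Type*} [Field K] {p : ℕ} (e1 e2 e3 : K)
    (hd : (e1 - e2) * (e2 - e3) * (e3 - e1) ≠ 0)
    (h1 : e1 ^ p = e2) (h2 : e2 ^ p = e3) (h3 : e3 ^ p = e1)
    (y : K) (hyp : y ^ p = y)
    (hy : (y - e1) * ((y - e2) * (y - e3)) = 0) : False := by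
  rcases mul_eq_zero.mp hy with h | h
  · have hye : y = e1 := sub_eq_zero.mp h
    have he : e2 = e1 := by rw [← h1, ← hye, hyp, hye]
    exact hd (by rw [show e1 - e2 = 0 by rw [he]; ring, zero_mul, zero_mul])
  · rcases mul_eq_zero.mp h with h' | h'
    · have hye : y = e2 := sub_eq_zero.mp h'
      have he : e3 = e2 := by rw [← h2, ← hye, hyp, hye]
      exact hd (by rw [show e2 - e3 = 0 by rw [he]; ring, mul_zero, zero_mul])
    · have hye : y = e3 := sub_eq_zero.mp h'
      have he : e1 = e3 := by rw [← h3, ← hye, hyp, hye]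
      exact hd (by rw [show e3 - e1 = 0 by rw [he]; ring, mul_zero])

private lemma exists_root_v_iff (p : ℕ) (hp : p.Prime) (h13 : p ≠ 13) :
    (∃ y : ZMod p, y ^ 3 + y ^ 2 - 4 * y + 1 = 0) ↔
      (p % 13 = 1 ∨ p % 13 = 5 ∨ p % 13 = 8 ∨ p % 13 = 12) := by
  haveI : Fact p.Prime := ⟨hp⟩
  classical
  set K := AlgebraicClosure (ZMod p) with hK
  have hdegq : (Polynomial.X ^ 12 + Polynomial.X ^ 11 + Polynomial.X ^ 10 + Polynomial.X ^ 9 + Polynomial.X ^ 8 + Polynomial.X ^ 7 + Polynomial.X ^ 6 + Polynomial.X ^ 5 + Polynomial.X ^ 4 + Polynomial.X ^ 3 + Polynomial.X ^ 2 + Polynomial.X + 1 : Polynomial K).degree = 12 := by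
    compute_degree!
  obtain ⟨z, hzr⟩ := IsAlgClosed.exists_root (k := K) (Polynomial.X ^ 12 + Polynomial.X ^ 11 + Polynomial.X ^ 10 + Polynomial.X ^ 9 + Polynomial.X ^ 8 + Polynomial.X ^ 7 + Polynomial.X ^ 6 + Polynomial.X ^ 5 + Polynomial.X ^ 4 + Polynomial.X ^ 3 + Polynomial.X ^ 2 + Polynomial.X + 1) (by rw [hdegq]; decide)
  have hS : z ^ 12 + z ^ 11 + z ^ 10 + z ^ 9 + z ^ 8 + z ^ 7 + z ^ 6 + z ^ 5 + z ^ 4 + z ^ 3 + z ^ 2 + z + 1 = 0 := by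
    simpa [Polynomial.IsRoot] using hzr
  have hz13 : z ^ 13 = 1 := by linear_combination (z - 1) * hS
  have hinj := (algebraMap (ZMod p) K).injective
  have h13K : (13 : K) ≠ 0 := by
    intro h
    have hdvd : p ∣ 13 := (CharP.cast_eq_zero_iff K p 13).mp (by exact_mod_cast h)
    exact h13 ((Nat.prime_dvd_prime_iff_eq hp (by norm_num)).mp hdvd)
  have hfac : ∀ t : K, t ^ 3 + t ^ 2 - 4 * t + 1 = (t - (z + z ^ 5 + z ^ 8 + z ^ 12)) * ((t - (z ^ 2 + z ^ 3 + z ^ 10 + z ^ 11)) * (t - (z ^ 4 + z ^ 6 + z ^ 7 + z ^ 9))) := by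
    intro t
    linear_combination (-t * (4 * z + 4 * z ^ 2 + 3 * z ^ 3 + 3 * z ^ 4 + 3 * z ^ 5 + 3 * z ^ 6 + z ^ 7 + z ^ 8 + z ^ 9 + z ^ 10) + (4 + 5 * z + 5 * z ^ 2 + 5 * z ^ 3 + 5 * z ^ 4 + 5 * z ^ 5 + 5 * z ^ 6 + 4 * z ^ 7 + 4 * z ^ 8 + 4 * z ^ 9 + 3 * z ^ 10 + 3 * z ^ 11 + 3 * z ^ 12 + 2 * z ^ 13 + 2 * z ^ 14 + 2 * z ^ 15 + 2 * z ^ 16 + z ^ 17 + z ^ 18 + z ^ 19)) * hz13 + (t ^ 2 - 4 * t + 5) * hS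
  have hd13 : ((z + z ^ 5 + z ^ 8 + z ^ 12) - (z ^ 2 + z ^ 3 + z ^ 10 + z ^ 11)) * (((z ^ 2 + z ^ 3 + z ^ 10 + z ^ 11) - (z ^ 4 + z ^ 6 + z ^ 7 + z ^ 9)) * ((z ^ 4 + z ^ 6 + z ^ 7 + z ^ 9) - (z + z ^ 5 + z ^ 8 + z ^ 12))) = 13 := by
    linear_combination (12 - z - z ^ 2 - z ^ 3 - z ^ 5 - 4 * z ^ 6 - 2 * z ^ 7 + z ^ 8 + 2 * z ^ 9 - 4 * z ^ 10 + 3 * z ^ 11 + 3 * z ^ 12 + 6 * z ^ 13 - 4 * z ^ 14 - 4 * z ^ 15 + 3 * z ^ 16 - 3 * z ^ 17 - 2 * z ^ 18 + z ^ 19 + 3 * z ^ 20 - z ^ 22) * hz13 - hS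
  have hfix : ∀ y : K, y ^ p = y → ∃ a : ZMod p, algebraMap (ZMod p) K a = y := by
    intro y hy
    by_contra hc
    push_neg at hc
    have hnd : (Polynomial.X ^ p - Polynomial.X : Polynomial K).natDegree = p := by
      compute_degree!
      · simp [hp.one_lt.ne, Int.subNatNat]
      · exact hp.one_lt.le
    have hfne : (Polynomial.X ^ p - Polynomial.X : Polynomial K) ≠ 0 := by
      intro h
      rw [h, Polynomial.natDegree_zero] at hnd
      exact hp.ne_zero hnd.symm
    have hsub : (insert y (Finset.univ.image (algebraMap (ZMod p) K))).val ⊆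
        (Polynomial.X ^ p - Polynomial.X : Polynomial K).roots := by
      intro x hx
      rw [Finset.mem_val] at hx
      rw [Polynomial.mem_roots hfne]
      rcases Finset.mem_insert.mp hx with h1 | hx'
      · rw [h1]; simp [Polynomial.IsRoot, hy]
      · obtain ⟨a, -, rfl⟩ := Finset.mem_image.mp hx'
        simp only [Polynomial.IsRoot, Polynomial.eval_sub, Polynomial.eval_pow, Polynomial.eval_X]
        rw [← map_pow, ZMod.pow_card, sub_self]
    have hle := Polynomial.card_le_degree_of_subset_roots hsub
    rw [hnd] at hle
    have hcard : (insert y (Finset.univ.image (algebraMap (ZMod p) K))).card = p + 1 := by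
      rw [Finset.card_insert_of_notMem (by
        simp only [Finset.mem_image]
        rintro ⟨a, -, ha⟩
        exact hc a ha), Finset.card_image_of_injective _ hinj, Finset.card_univ, ZMod.card]
    omega
  have hr0 : p % 13 ≠ 0 := by
    intro h
    exact h13 ((Nat.prime_dvd_prime_iff_eq (by norm_num) hp).mp (Nat.dvd_of_mod_eq_zero h)).symm
  have hrlt : p % 13 < 13 := Nat.mod_lt _ (by norm_num)
  constructor
  · rintro ⟨y, hy⟩
    have hyp' : (algebraMap (ZMod p) K y) ^ p = algebraMap (ZMod p) K y := by
      rw [← map_pow, ZMod.pow_card]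
    have hvy : (algebraMap (ZMod p) K y) ^ 3 + (algebraMap (ZMod p) K y) ^ 2 - 4 * (algebraMap (ZMod p) K y) + 1 = 0 := by
      have h' := congrArg (algebraMap (ZMod p) K) hy
      simpa [map_add, map_sub, map_mul, map_pow, map_ofNat] using h'
    have hprod := hfac (algebraMap (ZMod p) K y)
    rw [hvy] at hprod
    have hcases : p % 13 = 1 ∨ p % 13 = 2 ∨ p % 13 = 3 ∨ p % 13 = 4 ∨ p % 13 = 5 ∨ p % 13 = 6 ∨ p % 13 = 7 ∨ p % 13 = 8 ∨ p % 13 = 9 ∨ p % 13 = 10 ∨ p % 13 = 11 ∨ p % 13 = 12 := by omega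
    rcases hcases with hr|hr|hr|hr|hr|hr|hr|hr|hr|hr|hr|hr
    · exact Or.inl hr
    · exfalso
      have hzp : z ^ p = z ^ 2 := by
        have hsplit : z ^ p = z ^ (13 * (p / 13) + p % 13) := by rw [Nat.div_add_mod]
        rw [hsplit, hr, pow_add, pow_mul, hz13, one_pow, one_mul]
      have him1 : (z + z ^ 5 + z ^ 8 + z ^ 12) ^ p = (z ^ 2 + z ^ 3 + z ^ 10 + z ^ 11) := by
        rw [add_pow_char, add_pow_char, add_pow_char, pow_right_comm z 5, pow_right_comm z 8, pow_right_comm z 12, hzp]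
        linear_combination (z ^ 3 + z ^ 11) * hz13
      have him2 : (z ^ 2 + z ^ 3 + z ^ 10 + z ^ 11) ^ p = (z ^ 4 + z ^ 6 + z ^ 7 + z ^ 9) := by
        rw [add_pow_char, add_pow_char, add_pow_char, pow_right_comm z 2, pow_right_comm z 3, pow_right_comm z 10, pow_right_comm z 11, hzp]
        linear_combination (z ^ 7 + z ^ 9) * hz13
      have him3 : (z ^ 4 + z ^ 6 + z ^ 7 + z ^ 9) ^ p = (z + z ^ 5 + z ^ 8 + z ^ 12) := by
        rw [add_pow_char, add_pow_char, add_pow_char, pow_right_comm z 4, pow_right_comm z 6, pow_right_comm z 7, pow_right_comm z 9, hzp]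
        linear_combination (z + z ^ 5) * hz13
      exact no_root_aux _ _ _ (by rw [mul_assoc]; rw [hd13]; exact h13K) him1 him2 him3 _ hyp' (hprod).symm
    · exfalso
      have hzp : z ^ p = z ^ 3 := by
        have hsplit : z ^ p = z ^ (13 * (p / 13) + p % 13) := by rw [Nat.div_add_mod]
        rw [hsplit, hr, pow_add, pow_mul, hz13, one_pow, one_mul]
      have him1 : (z + z ^ 5 + z ^ 8 + z ^ 12) ^ p = (z ^ 2 + z ^ 3 + z ^ 10 + z ^ 11) := by
        rw [add_pow_char, add_pow_char, add_pow_char, pow_right_comm z 5, pow_right_comm z 8, pow_right_comm z 12, hzp]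
        linear_combination (z ^ 2 + z ^ 10 + z ^ 11 + z ^ 23) * hz13
      have him2 : (z ^ 2 + z ^ 3 + z ^ 10 + z ^ 11) ^ p = (z ^ 4 + z ^ 6 + z ^ 7 + z ^ 9) := by
        rw [add_pow_char, add_pow_char, add_pow_char, pow_right_comm z 2, pow_right_comm z 3, pow_right_comm z 10, pow_right_comm z 11, hzp]
        linear_combination (z ^ 4 + z ^ 7 + z ^ 17 + z ^ 20) * hz13
      have him3 : (z ^ 4 + z ^ 6 + z ^ 7 + z ^ 9) ^ p = (z + z ^ 5 + z ^ 8 + z ^ 12) := by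
        rw [add_pow_char, add_pow_char, add_pow_char, pow_right_comm z 4, pow_right_comm z 6, pow_right_comm z 7, pow_right_comm z 9, hzp]
        linear_combination (z + z ^ 5 + z ^ 8 + z ^ 14) * hz13
      exact no_root_aux _ _ _ (by rw [mul_assoc]; rw [hd13]; exact h13K) him1 him2 him3 _ hyp' (hprod).symm
    · exfalso
      have hzp : z ^ p = z ^ 4 := by
        have hsplit : z ^ p = z ^ (13 * (p / 13) + p % 13) := by rw [Nat.div_add_mod]
        rw [hsplit, hr, pow_add, pow_mul, hz13, one_pow, one_mul]
      have him1 : (z + z ^ 5 + z ^ 8 + z ^ 12) ^ p = (z ^ 4 + z ^ 6 + z ^ 7 + z ^ 9) := by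
        rw [add_pow_char, add_pow_char, add_pow_char, pow_right_comm z 5, pow_right_comm z 8, pow_right_comm z 12, hzp]
        linear_combination (z ^ 6 + z ^ 7 + z ^ 9 + z ^ 19 + z ^ 22 + z ^ 35) * hz13
      have him2 : (z ^ 2 + z ^ 3 + z ^ 10 + z ^ 11) ^ p = (z + z ^ 5 + z ^ 8 + z ^ 12) := by
        rw [add_pow_char, add_pow_char, add_pow_char, pow_right_comm z 2, pow_right_comm z 3, pow_right_comm z 10, pow_right_comm z 11, hzp]
        linear_combination (z + z ^ 5 + z ^ 14 + z ^ 18 + z ^ 27 + z ^ 31) * hz13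
      have him3 : (z ^ 4 + z ^ 6 + z ^ 7 + z ^ 9) ^ p = (z ^ 2 + z ^ 3 + z ^ 10 + z ^ 11) := by
        rw [add_pow_char, add_pow_char, add_pow_char, pow_right_comm z 4, pow_right_comm z 6, pow_right_comm z 7, pow_right_comm z 9, hzp]
        linear_combination (z ^ 2 + z ^ 3 + z ^ 10 + z ^ 11 + z ^ 15 + z ^ 23) * hz13
      refine no_root_aux (z + z ^ 5 + z ^ 8 + z ^ 12) (z ^ 4 + z ^ 6 + z ^ 7 + z ^ 9) (z ^ 2 + z ^ 3 + z ^ 10 + z ^ 11) ?_ him1 him3 him2 _ hyp' (by linear_combination -hprod)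
      intro h0
      exact h13K (by linear_combination -hd13 - h0)
    · exact Or.inr (Or.inl hr)
    · exfalso
      have hzp : z ^ p = z ^ 6 := by
        have hsplit : z ^ p = z ^ (13 * (p / 13) + p % 13) := by rw [Nat.div_add_mod]
        rw [hsplit, hr, pow_add, pow_mul, hz13, one_pow, one_mul]
      have him1 : (z + z ^ 5 + z ^ 8 + z ^ 12) ^ p = (z ^ 4 + z ^ 6 + z ^ 7 + z ^ 9) := by
        rw [add_pow_char, add_pow_char, add_pow_char, pow_right_comm z 5, pow_right_comm z 8, pow_right_comm z 12, hzp]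
        linear_combination (z ^ 4 + z ^ 7 + z ^ 9 + z ^ 17 + z ^ 20 + z ^ 22 + z ^ 33 + z ^ 35 + z ^ 46 + z ^ 59) * hz13
      have him2 : (z ^ 2 + z ^ 3 + z ^ 10 + z ^ 11) ^ p = (z + z ^ 5 + z ^ 8 + z ^ 12) := by
        rw [add_pow_char, add_pow_char, add_pow_char, pow_right_comm z 2, pow_right_comm z 3, pow_right_comm z 10, pow_right_comm z 11, hzp]
        linear_combination (z + z ^ 5 + z ^ 8 + z ^ 14 + z ^ 21 + z ^ 27 + z ^ 34 + z ^ 40 + z ^ 47 + z ^ 53) * hz13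
      have him3 : (z ^ 4 + z ^ 6 + z ^ 7 + z ^ 9) ^ p = (z ^ 2 + z ^ 3 + z ^ 10 + z ^ 11) := by
        rw [add_pow_char, add_pow_char, add_pow_char, pow_right_comm z 4, pow_right_comm z 6, pow_right_comm z 7, pow_right_comm z 9, hzp]
        linear_combination (z ^ 2 + z ^ 3 + z ^ 10 + z ^ 11 + z ^ 15 + z ^ 16 + z ^ 23 + z ^ 28 + z ^ 29 + z ^ 41) * hz13
      refine no_root_aux (z + z ^ 5 + z ^ 8 + z ^ 12) (z ^ 4 + z ^ 6 + z ^ 7 + z ^ 9) (z ^ 2 + z ^ 3 + z ^ 10 + z ^ 11) ?_ him1 him3 him2 _ hyp' (by linear_combination -hprod)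
      intro h0
      exact h13K (by linear_combination -hd13 - h0)
    · exfalso
      have hzp : z ^ p = z ^ 7 := by
        have hsplit : z ^ p = z ^ (13 * (p / 13) + p % 13) := by rw [Nat.div_add_mod]
        rw [hsplit, hr, pow_add, pow_mul, hz13, one_pow, one_mul]
      have him1 : (z + z ^ 5 + z ^ 8 + z ^ 12) ^ p = (z ^ 4 + z ^ 6 + z ^ 7 + z ^ 9) := by
        rw [add_pow_char, add_pow_char, add_pow_char, pow_right_comm z 5, pow_right_comm z 8, pow_right_comm z 12, hzp]
        linear_combination (z ^ 4 + z ^ 6 + z ^ 9 + z ^ 17 + z ^ 19 + z ^ 22 + z ^ 30 + z ^ 32 + z ^ 43 + z ^ 45 + z ^ 58 + z ^ 71) * hz13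
      have him2 : (z ^ 2 + z ^ 3 + z ^ 10 + z ^ 11) ^ p = (z + z ^ 5 + z ^ 8 + z ^ 12) := by
        rw [add_pow_char, add_pow_char, add_pow_char, pow_right_comm z 2, pow_right_comm z 3, pow_right_comm z 10, pow_right_comm z 11, hzp]
        linear_combination (z + z ^ 5 + z ^ 8 + z ^ 12 + z ^ 18 + z ^ 25 + z ^ 31 + z ^ 38 + z ^ 44 + z ^ 51 + z ^ 57 + z ^ 64) * hz13
      have him3 : (z ^ 4 + z ^ 6 + z ^ 7 + z ^ 9) ^ p = (z ^ 2 + z ^ 3 + z ^ 10 + z ^ 11) := by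
        rw [add_pow_char, add_pow_char, add_pow_char, pow_right_comm z 4, pow_right_comm z 6, pow_right_comm z 7, pow_right_comm z 9, hzp]
        linear_combination (z ^ 2 + z ^ 3 + z ^ 10 + z ^ 11 + z ^ 15 + z ^ 16 + z ^ 23 + z ^ 24 + z ^ 29 + z ^ 36 + z ^ 37 + z ^ 50) * hz13
      refine no_root_aux (z + z ^ 5 + z ^ 8 + z ^ 12) (z ^ 4 + z ^ 6 + z ^ 7 + z ^ 9) (z ^ 2 + z ^ 3 + z ^ 10 + z ^ 11) ?_ him1 him3 him2 _ hyp' (by linear_combination -hprod)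
      intro h0
      exact h13K (by linear_combination -hd13 - h0)
    · exact Or.inr (Or.inr (Or.inl hr))
    · exfalso
      have hzp : z ^ p = z ^ 9 := by
        have hsplit : z ^ p = z ^ (13 * (p / 13) + p % 13) := by rw [Nat.div_add_mod]
        rw [hsplit, hr, pow_add, pow_mul, hz13, one_pow, one_mul]
      have him1 : (z + z ^ 5 + z ^ 8 + z ^ 12) ^ p = (z ^ 4 + z ^ 6 + z ^ 7 + z ^ 9) := by
        rw [add_pow_char, add_pow_char, add_pow_char, pow_right_comm z 5, pow_right_comm z 8, pow_right_comm z 12, hzp]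
        linear_combination (z ^ 4 + z ^ 6 + z ^ 7 + z ^ 17 + z ^ 19 + z ^ 20 + z ^ 30 + z ^ 32 + z ^ 33 + z ^ 43 + z ^ 46 + z ^ 56 + z ^ 59 + z ^ 69 + z ^ 82 + z ^ 95) * hz13
      have him2 : (z ^ 2 + z ^ 3 + z ^ 10 + z ^ 11) ^ p = (z + z ^ 5 + z ^ 8 + z ^ 12) := by
        rw [add_pow_char, add_pow_char, add_pow_char, pow_right_comm z 2, pow_right_comm z 3, pow_right_comm z 10, pow_right_comm z 11, hzp]
        linear_combination (z + z ^ 5 + z ^ 8 + z ^ 12 + z ^ 14 + z ^ 21 + z ^ 25 + z ^ 34 + z ^ 38 + z ^ 47 + z ^ 51 + z ^ 60 + z ^ 64 + z ^ 73 + z ^ 77 + z ^ 86) * hz13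
      have him3 : (z ^ 4 + z ^ 6 + z ^ 7 + z ^ 9) ^ p = (z ^ 2 + z ^ 3 + z ^ 10 + z ^ 11) := by
        rw [add_pow_char, add_pow_char, add_pow_char, pow_right_comm z 4, pow_right_comm z 6, pow_right_comm z 7, pow_right_comm z 9, hzp]
        linear_combination (z ^ 2 + z ^ 3 + z ^ 10 + z ^ 11 + z ^ 15 + z ^ 16 + z ^ 23 + z ^ 24 + z ^ 28 + z ^ 29 + z ^ 37 + z ^ 41 + z ^ 42 + z ^ 50 + z ^ 55 + z ^ 68) * hz13
      refine no_root_aux (z + z ^ 5 + z ^ 8 + z ^ 12) (z ^ 4 + z ^ 6 + z ^ 7 + z ^ 9) (z ^ 2 + z ^ 3 + z ^ 10 + z ^ 11) ?_ him1 him3 him2 _ hyp' (by linear_combination -hprod)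
      intro h0
      exact h13K (by linear_combination -hd13 - h0)
    · exfalso
      have hzp : z ^ p = z ^ 10 := by
        have hsplit : z ^ p = z ^ (13 * (p / 13) + p % 13) := by rw [Nat.div_add_mod]
        rw [hsplit, hr, pow_add, pow_mul, hz13, one_pow, one_mul]
      have him1 : (z + z ^ 5 + z ^ 8 + z ^ 12) ^ p = (z ^ 2 + z ^ 3 + z ^ 10 + z ^ 11) := by
        rw [add_pow_char, add_pow_char, add_pow_char, pow_right_comm z 5, pow_right_comm z 8, pow_right_comm z 12, hzp]
        linear_combination (z ^ 2 + z ^ 3 + z ^ 11 + z ^ 15 + z ^ 16 + z ^ 24 + z ^ 28 + z ^ 29 + z ^ 37 + z ^ 41 + z ^ 42 + z ^ 54 + z ^ 55 + z ^ 67 + z ^ 68 + z ^ 81 + z ^ 94 + z ^ 107) * hz13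
      have him2 : (z ^ 2 + z ^ 3 + z ^ 10 + z ^ 11) ^ p = (z ^ 4 + z ^ 6 + z ^ 7 + z ^ 9) := by
        rw [add_pow_char, add_pow_char, add_pow_char, pow_right_comm z 2, pow_right_comm z 3, pow_right_comm z 10, pow_right_comm z 11, hzp]
        linear_combination (z ^ 4 + z ^ 6 + z ^ 7 + z ^ 9 + z ^ 17 + z ^ 19 + z ^ 22 + z ^ 32 + z ^ 35 + z ^ 45 + z ^ 48 + z ^ 58 + z ^ 61 + z ^ 71 + z ^ 74 + z ^ 84 + z ^ 87 + z ^ 97) * hz13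
      have him3 : (z ^ 4 + z ^ 6 + z ^ 7 + z ^ 9) ^ p = (z + z ^ 5 + z ^ 8 + z ^ 12) := by
        rw [add_pow_char, add_pow_char, add_pow_char, pow_right_comm z 4, pow_right_comm z 6, pow_right_comm z 7, pow_right_comm z 9, hzp]
        linear_combination (z + z ^ 5 + z ^ 8 + z ^ 12 + z ^ 14 + z ^ 18 + z ^ 21 + z ^ 25 + z ^ 27 + z ^ 31 + z ^ 34 + z ^ 38 + z ^ 44 + z ^ 47 + z ^ 51 + z ^ 57 + z ^ 64 + z ^ 77) * hz13
      exact no_root_aux _ _ _ (by rw [mul_assoc]; rw [hd13]; exact h13K) him1 him2 him3 _ hyp' (hprod).symm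
    · exfalso
      have hzp : z ^ p = z ^ 11 := by
        have hsplit : z ^ p = z ^ (13 * (p / 13) + p % 13) := by rw [Nat.div_add_mod]
        rw [hsplit, hr, pow_add, pow_mul, hz13, one_pow, one_mul]
      have him1 : (z + z ^ 5 + z ^ 8 + z ^ 12) ^ p = (z ^ 2 + z ^ 3 + z ^ 10 + z ^ 11) := by
        rw [add_pow_char, add_pow_char, add_pow_char, pow_right_comm z 5, pow_right_comm z 8, pow_right_comm z 12, hzp]
        linear_combination (z ^ 2 + z ^ 3 + z ^ 10 + z ^ 15 + z ^ 16 + z ^ 23 + z ^ 28 + z ^ 29 + z ^ 36 + z ^ 41 + z ^ 42 + z ^ 49 + z ^ 54 + z ^ 62 + z ^ 67 + z ^ 75 + z ^ 80 + z ^ 93 + z ^ 106 + z ^ 119) * hz13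
      have him2 : (z ^ 2 + z ^ 3 + z ^ 10 + z ^ 11) ^ p = (z ^ 4 + z ^ 6 + z ^ 7 + z ^ 9) := by
        rw [add_pow_char, add_pow_char, add_pow_char, pow_right_comm z 2, pow_right_comm z 3, pow_right_comm z 10, pow_right_comm z 11, hzp]
        linear_combination (z ^ 4 + z ^ 6 + z ^ 7 + z ^ 9 + z ^ 17 + z ^ 19 + z ^ 20 + z ^ 30 + z ^ 32 + z ^ 43 + z ^ 45 + z ^ 56 + z ^ 58 + z ^ 69 + z ^ 71 + z ^ 82 + z ^ 84 + z ^ 95 + z ^ 97 + z ^ 108) * hz13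
      have him3 : (z ^ 4 + z ^ 6 + z ^ 7 + z ^ 9) ^ p = (z + z ^ 5 + z ^ 8 + z ^ 12) := by
        rw [add_pow_char, add_pow_char, add_pow_char, pow_right_comm z 4, pow_right_comm z 6, pow_right_comm z 7, pow_right_comm z 9, hzp]
        linear_combination (z + z ^ 5 + z ^ 8 + z ^ 12 + z ^ 14 + z ^ 18 + z ^ 21 + z ^ 25 + z ^ 27 + z ^ 31 + z ^ 34 + z ^ 38 + z ^ 40 + z ^ 47 + z ^ 51 + z ^ 53 + z ^ 60 + z ^ 64 + z ^ 73 + z ^ 86) * hz13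
      exact no_root_aux _ _ _ (by rw [mul_assoc]; rw [hd13]; exact h13K) him1 him2 him3 _ hyp' (hprod).symm
    · exact Or.inr (Or.inr (Or.inr hr))
  · intro hcase
    rcases hcase with hr | hr | hr | hr
    · have hzp : z ^ p = z ^ 1 := by
        have hsplit : z ^ p = z ^ (13 * (p / 13) + p % 13) := by rw [Nat.div_add_mod]
        rw [hsplit, hr, pow_add, pow_mul, hz13, one_pow, one_mul]
      have him1 : (z + z ^ 5 + z ^ 8 + z ^ 12) ^ p = (z + z ^ 5 + z ^ 8 + z ^ 12) := by
        rw [add_pow_char, add_pow_char, add_pow_char, pow_right_comm z 5, pow_right_comm z 8, pow_right_comm z 12, hzp]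
        linear_combination (0 : K) * hz13
      obtain ⟨a, ha⟩ := hfix _ him1
      refine ⟨a, ?_⟩
      have hmap : algebraMap (ZMod p) K (a ^ 3 + a ^ 2 - 4 * a + 1) = 0 := by
        rw [map_add, map_sub, map_add, map_pow, map_pow, map_mul, map_ofNat, map_one, ha]
        linear_combination hfac (z + z ^ 5 + z ^ 8 + z ^ 12)
      exact hinj (by rw [map_zero]; exact hmap)
    · have hzp : z ^ p = z ^ 5 := by
        have hsplit : z ^ p = z ^ (13 * (p / 13) + p % 13) := by rw [Nat.div_add_mod]
        rw [hsplit, hr, pow_add, pow_mul, hz13, one_pow, one_mul]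
      have him1 : (z + z ^ 5 + z ^ 8 + z ^ 12) ^ p = (z + z ^ 5 + z ^ 8 + z ^ 12) := by
        rw [add_pow_char, add_pow_char, add_pow_char, pow_right_comm z 5, pow_right_comm z 8, pow_right_comm z 12, hzp]
        linear_combination (z + z ^ 8 + z ^ 12 + z ^ 14 + z ^ 21 + z ^ 27 + z ^ 34 + z ^ 47) * hz13
      obtain ⟨a, ha⟩ := hfix _ him1
      refine ⟨a, ?_⟩
      have hmap : algebraMap (ZMod p) K (a ^ 3 + a ^ 2 - 4 * a + 1) = 0 := by
        rw [map_add, map_sub, map_add, map_pow, map_pow, map_mul, map_ofNat, map_one, ha]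
        linear_combination hfac (z + z ^ 5 + z ^ 8 + z ^ 12)
      exact hinj (by rw [map_zero]; exact hmap)
    · have hzp : z ^ p = z ^ 8 := by
        have hsplit : z ^ p = z ^ (13 * (p / 13) + p % 13) := by rw [Nat.div_add_mod]
        rw [hsplit, hr, pow_add, pow_mul, hz13, one_pow, one_mul]
      have him1 : (z + z ^ 5 + z ^ 8 + z ^ 12) ^ p = (z + z ^ 5 + z ^ 8 + z ^ 12) := by
        rw [add_pow_char, add_pow_char, add_pow_char, pow_right_comm z 5, pow_right_comm z 8, pow_right_comm z 12, hzp]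
        linear_combination (z + z ^ 5 + z ^ 12 + z ^ 14 + z ^ 18 + z ^ 25 + z ^ 27 + z ^ 31 + z ^ 38 + z ^ 44 + z ^ 51 + z ^ 57 + z ^ 70 + z ^ 83) * hz13
      obtain ⟨a, ha⟩ := hfix _ him1
      refine ⟨a, ?_⟩
      have hmap : algebraMap (ZMod p) K (a ^ 3 + a ^ 2 - 4 * a + 1) = 0 := by
        rw [map_add, map_sub, map_add, map_pow, map_pow, map_mul, map_ofNat, map_one, ha]
        linear_combination hfac (z + z ^ 5 + z ^ 8 + z ^ 12)
      exact hinj (by rw [map_zero]; exact hmap)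
    · have hzp : z ^ p = z ^ 12 := by
        have hsplit : z ^ p = z ^ (13 * (p / 13) + p % 13) := by rw [Nat.div_add_mod]
        rw [hsplit, hr, pow_add, pow_mul, hz13, one_pow, one_mul]
      have him1 : (z + z ^ 5 + z ^ 8 + z ^ 12) ^ p = (z + z ^ 5 + z ^ 8 + z ^ 12) := by
        rw [add_pow_char, add_pow_char, add_pow_char, pow_right_comm z 5, pow_right_comm z 8, pow_right_comm z 12, hzp]
        linear_combination (z + z ^ 5 + z ^ 8 + z ^ 14 + z ^ 18 + z ^ 21 + z ^ 27 + z ^ 31 + z ^ 34 + z ^ 40 + z ^ 44 + z ^ 47 + z ^ 53 + z ^ 57 + z ^ 66 + z ^ 70 + z ^ 79 + z ^ 83 + z ^ 92 + z ^ 105 + z ^ 118 + z ^ 131) * hz13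
      obtain ⟨a, ha⟩ := hfix _ him1
      refine ⟨a, ?_⟩
      have hmap : algebraMap (ZMod p) K (a ^ 3 + a ^ 2 - 4 * a + 1) = 0 := by
        rw [map_add, map_sub, map_add, map_pow, map_pow, map_mul, map_ofNat, map_one, ha]
        linear_combination hfac (z + z ^ 5 + z ^ 8 + z ^ 12)
      exact hinj (by rw [map_zero]; exact hmap)

/-- The cubic `u(X) = X³ − 84X² + 896X − 1984` has a root in `𝔽_p` (for a prime
`p ∉ {2, 13, 31}`) if and only if `p ≡ 1, 5, 8, 12 (mod 13)`. -/
theorem cubic_u_root_mod_condition (p : ℕ) (hp : p.Prime)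
    (h2 : p ≠ 2) (h13 : p ≠ 13) (h31 : p ≠ 31) :
    (∃ x : ZMod p, x ^ 3 - 84 * x ^ 2 + 896 * x - 1984 = 0) ↔
      (p % 13 = 1 ∨ p % 13 = 5 ∨ p % 13 = 8 ∨ p % 13 = 12) := by
  haveI : Fact p.Prime := ⟨hp⟩
  rw [← exists_root_v_iff p hp h13]
  have h496 : (496 : ZMod p) ≠ 0 := by
    intro h
    have hdvd : p ∣ 496 := (CharP.cast_eq_zero_iff (ZMod p) p 496).mp (by exact_mod_cast h)
    have h16 : p ∣ 2 ^ 4 * 31 := by norm_num at hdvd ⊢; exact hdvd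
    rcases (Nat.Prime.dvd_mul hp).mp h16 with h' | h'
    · exact h2 ((Nat.prime_dvd_prime_iff_eq hp (by norm_num)).mp (hp.dvd_of_dvd_pow h'))
    · exact h31 ((Nat.prime_dvd_prime_iff_eq hp (by norm_num)).mp h')
  constructor
  · rintro ⟨x, hx⟩
    refine ⟨(x ^ 2 - 104 * x + 992) * (496 : ZMod p)⁻¹, ?_⟩
    have hi : (496 : ZMod p) * (496 : ZMod p)⁻¹ = 1 := mul_inv_cancel₀ h496
    linear_combination ((496 : ZMod p)⁻¹ ^ 3 * (x ^ 3 - 228 * x ^ 2 + 15872 * x - 307520)) * hx + (-(x ^ 2 - 104 * x + 992) ^ 2 * (496 : ZMod p)⁻¹ ^ 2 + 4 * (x ^ 2 - 104 * x + 992) * (496 : ZMod p)⁻¹ * (1 + 496 * (496 : ZMod p)⁻¹) - (496 ^ 2 * (496 : ZMod p)⁻¹ ^ 2 + 496 * (496 : ZMod p)⁻¹ + 1)) * hi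
  · rintro ⟨y, hy⟩
    refine ⟨4 * y ^ 2 - 12 * y + 12, ?_⟩
    linear_combination (64 * y ^ 3 - 640 * y ^ 2 + 1856 * y - 1600) * hy
end

section
/- Let p be a prime number with p ∉ {2, 7}. Then the cubic polynomial v(X) = X³ − 48X² + 656X − 1856 has a root in the finite field 𝔽_p = ZMod p if and only if p mod 7 ∈ {1, 6}. -/
open Polynomial

/-- In a field of characteristic `p` (as a `ZMod p`-algebra), any element fixed by the
Frobenius lies in the prime field. -/
lemma frob_fixed_mem {p : ℕ} [Fact p.Prime] {K : Type*} [Field K] [Algebra (ZMod p) K]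
    {a : K} (ha : a ^ p = a) : ∃ b : ZMod p, algebraMap (ZMod p) K b = a := by
  by_contra hcon
  push_neg at hcon
  classical
  have hp1 : 1 < p := (Fact.out : p.Prime).one_lt
  have hinj : Function.Injective (algebraMap (ZMod p) K) := (algebraMap (ZMod p) K).injective
  have hfne : (X ^ p - X : K[X]) ≠ 0 := FiniteField.X_pow_card_sub_X_ne_zero K hp1
  set Z : Finset K := insert a (Finset.univ.image (algebraMap (ZMod p) K)) with hZ
  have hsub : Z.val ⊆ (X ^ p - X : K[X]).roots := by
    intro c hc
    have hc' : c ∈ Z := hc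
    rw [Polynomial.mem_roots hfne]
    have : c ^ p = c := by
      rcases Finset.mem_insert.mp hc' with h | h
      · rw [h]; exact ha
      · obtain ⟨b, _, rfl⟩ := Finset.mem_image.mp h
        rw [← map_pow, ZMod.pow_card]
    simp [Polynomial.IsRoot, this]
  have hcard : Z.card = p + 1 := by
    rw [hZ, Finset.card_insert_of_notMem (by
      intro h
      obtain ⟨b, _, hb⟩ := Finset.mem_image.mp h
      exact hcon b hb), Finset.card_image_of_injective _ hinj, Finset.card_univ, ZMod.card]
  have hle := Polynomial.card_le_degree_of_subset_roots hsub
  rw [hcard, FiniteField.X_pow_card_sub_X_natDegree_eq K hp1] at hle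
  omega

/-- The cubic `y³ + y² − 2y − 1` (minimal polynomial of `2cos(2π/7)`) has a root mod `p`
iff `p ≡ ±1 (mod 7)`. -/
lemma w_root_iff (p : ℕ) (hp : p.Prime) (h2 : p ≠ 2) (h7 : p ≠ 7) :
    (∃ y : ZMod p, y ^ 3 + y ^ 2 - 2 * y - 1 = 0) ↔ (p % 7 = 1 ∨ p % 7 = 6) := by
  haveI : Fact p.Prime := ⟨hp⟩
  haveI : Fact (Nat.Prime 7) := ⟨by norm_num⟩
  constructor
  · rintro ⟨y, hy⟩
    set K := AlgebraicClosure (ZMod p) with hK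
    haveI : CharP K p := charP_of_injective_algebraMap (algebraMap (ZMod p) K).injective p
    set y' : K := algebraMap (ZMod p) K y with hy'def
    have hy' : y' ^ 3 + y' ^ 2 - 2 * y' - 1 = 0 := by
      have := congrArg (algebraMap (ZMod p) K) hy
      simpa [map_add, map_sub, map_mul, map_pow, map_one, map_ofNat] using this
    have h2K : (2 : K) ≠ 0 := by
      intro h
      have : (p : ℕ) ∣ 2 := by
        have := (CharP.cast_eq_zero_iff K p 2).mp (by exact_mod_cast h)
        exact this
      exact h2 ((Nat.prime_dvd_prime_iff_eq hp (by norm_num)).mp this)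
    have h4K : (4 : K) ≠ 0 := by
      have : (4 : K) = 2 * 2 := by norm_num
      rw [this]; exact mul_ne_zero h2K h2K
    -- find a root of X² - y'X + 1 via a square root of the discriminant
    obtain ⟨s, hs⟩ := IsAlgClosed.exists_pow_nat_eq (k := K) (y' ^ 2 - 4) (n := 2) (by norm_num)
    obtain ⟨x, hx2⟩ : ∃ x : K, (2 : K) * x = y' + s :=
      ⟨(y' + s) * (2 : K)⁻¹, by rw [mul_comm, mul_assoc, inv_mul_cancel₀ h2K, mul_one]⟩
    have hx : x ^ 2 - y' * x + 1 = 0 := by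
      apply mul_left_cancel₀ h4K
      rw [mul_zero]
      linear_combination (2 * x - y' + s) * hx2 + hs
    have hx0 : x ≠ 0 := by
      intro h
      rw [h] at hx
      simp at hx
    have hx7 : x ^ 7 = 1 := by
      linear_combination (x^5 + y'*x^4 + (y'^2-1)*x^3 + (y'^3-2*y')*x^2 +
        (y'^4-3*y'^2+1)*x + (y'^5-4*y'^3+3*y')) * hx +
        ((y'^3-y'^2-2*y'+1)*x + (-y'^2+y'+1)) * hy'
    have hx1 : x ≠ 1 := by
      intro h
      rw [h] at hx
      have hy2 : y' = 2 := by linear_combination -hx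
      have h7K : (7 : K) = 0 := by
        linear_combination hy' - (y'^2 + 3*y' + 4) * hy2
      have : (p : ℕ) ∣ 7 := (CharP.cast_eq_zero_iff K p 7).mp (by exact_mod_cast h7K)
      exact h7 ((Nat.prime_dvd_prime_iff_eq hp (by norm_num)).mp this)
    have horder : orderOf x = 7 := orderOf_eq_prime hx7 hx1
    -- frobenius
    have hyp : y' ^ p = y' := by rw [hy'def, ← map_pow, ZMod.pow_card]
    have hfrob : (x ^ p) ^ 2 - y' * (x ^ p) + 1 = 0 := by
      have h0 : (x ^ 2 - y' * x + 1) ^ p = 0 := by rw [hx]; exact zero_pow hp.ne_zero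
      rw [add_pow_char, sub_pow_char, mul_pow, one_pow, hyp, ← pow_mul, mul_comm 2 p,
        pow_mul] at h0
      exact h0
    have hcases : (x ^ p - x) * (x ^ p - (y' - x)) = 0 := by
      linear_combination hfrob - hx
    have hxp2 : x ^ p ^ 2 = x := by
      have e : x ^ p ^ 2 = (x ^ p) ^ p := by rw [← pow_mul, ← pow_two]
      rcases mul_eq_zero.mp hcases with h | h
      · have hq : x ^ p = x := by linear_combination h
        rw [e, hq, hq]
      · have hq : x ^ p = y' - x := by linear_combination h
        have hmul : x * x ^ p = 1 := by rw [hq]; linear_combination -hx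
        have hinv : x ^ p = x⁻¹ := eq_inv_of_mul_eq_one_right hmul
        rw [e, hinv, inv_pow, hinv, inv_inv]
    have h1le : 1 ≤ p ^ 2 := Nat.one_le_pow 2 p hp.pos
    have hx21 : x ^ (p ^ 2 - 1) = 1 := by
      have h2' : x ^ (p ^ 2 - 1) * x = 1 * x := by
        rw [← pow_succ, Nat.sub_add_cancel h1le, hxp2, one_mul]
      exact mul_right_cancel₀ hx0 h2'
    have hdvd : (7 : ℕ) ∣ p ^ 2 - 1 := horder ▸ orderOf_dvd_of_pow_eq_one hx21
    -- arithmetic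
    obtain ⟨k, hk⟩ := hdvd
    have hpp : p ^ 2 = p * p := pow_two p
    set m := p * p with hm
    have hm1 : m % 7 = 1 := by rw [hpp] at hk h1le; omega
    have hmod := Nat.mul_mod p p 7
    rw [← hm] at hmod
    set r := p % 7 with hr
    have hr7 : r < 7 := Nat.mod_lt _ (by norm_num)
    interval_cases r <;> omega
  · intro h
    -- 7 divides p² - 1
    have hp2 : 2 ≤ p := hp.two_le
    have hfac : p ^ 2 - 1 = (p - 1) * (p + 1) := by
      have h1 : 1 ≤ p := hp.pos
      zify [Nat.one_le_pow 2 p hp.pos, h1]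
      ring
    have hdvd : (7 : ℕ) ∣ p ^ 2 - 1 := by
      rw [hfac]
      rcases h with h | h
      · exact Dvd.dvd.mul_right (by omega) _
      · exact Dvd.dvd.mul_left (by omega) _
    set K := GaloisField p 2 with hKdef
    have hcardK : Nat.card K = p ^ 2 := GaloisField.card p 2 (by norm_num)
    have hcardU : Nat.card Kˣ = p ^ 2 - 1 := by rw [Nat.card_units, hcardK]
    obtain ⟨ζ, hζ⟩ := exists_prime_orderOf_dvd_card' (G := Kˣ) 7 (by rw [hcardU]; exact hdvd)
    set z : K := ((ζ : Kˣ) : K) with hzdef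
    have hz0 : z ≠ 0 := Units.ne_zero ζ
    have hz7 : z ^ 7 = 1 := by
      have h1 : ζ ^ 7 = 1 := by rw [← hζ]; exact pow_orderOf_eq_one ζ
      have h2 := congrArg (Units.val) h1
      rw [hzdef]
      simpa using h2
    have hz1 : z ≠ 1 := by
      intro h
      have : ζ = 1 := Units.ext h
      rw [this, orderOf_one] at hζ
      norm_num at hζ
    set zi : K := z⁻¹ with hzidef
    have hzz : z * zi = 1 := mul_inv_cancel₀ hz0
    set y0 : K := z + zi with hy0def
    have hkey : z ^ 3 * (y0 ^ 3 + y0 ^ 2 - 2 * y0 - 1) =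
        z^6 + z^5 + z^4 + z^3 + z^2 + z + 1 := by
      rw [hy0def]
      linear_combination (1 + z + z*zi + z^2 + z^2*zi + z^2*zi^2 + 2*z^3 + 3*z^3*zi + 3*z^4) * hzz
    have hsum : (z - 1) * (z^6 + z^5 + z^4 + z^3 + z^2 + z + 1) = 0 := by
      linear_combination hz7
    have hsum0 : z^6 + z^5 + z^4 + z^3 + z^2 + z + 1 = 0 :=
      (mul_eq_zero.mp hsum).resolve_left (sub_ne_zero.mpr hz1)
    have hw0 : y0 ^ 3 + y0 ^ 2 - 2 * y0 - 1 = 0 := by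
      have := hkey.trans hsum0
      exact (mul_eq_zero.mp this).resolve_left (pow_ne_zero 3 hz0)
    -- y0 is fixed by Frobenius
    have hzp : z ^ p = z ^ (p % 7) := by
      calc z ^ p = z ^ (7 * (p / 7) + p % 7) := by rw [Nat.div_add_mod]
        _ = (z ^ 7) ^ (p / 7) * z ^ (p % 7) := by rw [pow_add, pow_mul]
        _ = z ^ (p % 7) := by rw [hz7, one_pow, one_mul]
    have hz6 : z ^ 6 = zi := by
      rw [hzidef]
      exact eq_inv_of_mul_eq_one_left (by rw [← pow_succ]; exact hz7)
    have hzip : zi ^ p = (z ^ p)⁻¹ := by rw [hzidef, inv_pow]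
    have hy0p : y0 ^ p = y0 := by
      have hadd : (z + zi) ^ p = z ^ p + zi ^ p := add_pow_char z zi p
      rcases h with h | h
      · have hz' : z ^ p = z := by rw [hzp, h, pow_one]
        rw [hy0def, hadd, hz', hzip, hz', ← hzidef]
      · have hz' : z ^ p = zi := by rw [hzp, h, hz6]
        have hzi' : zi ^ p = z := by rw [hzip, hz', hzidef, inv_inv]
        rw [hy0def, hadd, hz', hzi', add_comm]
    obtain ⟨b, hb⟩ := frob_fixed_mem hy0p
    refine ⟨b, (algebraMap (ZMod p) K).injective ?_⟩
    rw [map_zero]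
    calc algebraMap (ZMod p) K (b ^ 3 + b ^ 2 - 2 * b - 1)
        = y0 ^ 3 + y0 ^ 2 - 2 * y0 - 1 := by
          simp [map_add, map_sub, map_mul, map_pow, map_one, map_ofNat, hb]
      _ = 0 := hw0

/-- The cubic `v(X) = X³ − 48X² + 656X − 1856` has a root in `𝔽_p` (for a prime
`p ∉ {2, 7}`) if and only if `p ≡ 1, 6 (mod 7)`. -/
theorem cubic_v_root_mod_condition (p : ℕ) (hp : p.Prime)
    (h2 : p ≠ 2) (h7 : p ≠ 7) :
    (∃ x : ZMod p, x ^ 3 - 48 * x ^ 2 + 656 * x - 1856 = 0) ↔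
      (p % 7 = 1 ∨ p % 7 = 6) := by
  haveI : Fact p.Prime := ⟨hp⟩
  rw [← w_root_iff p hp h2 h7]
  have h2Z : (2 : ZMod p) ≠ 0 := by
    intro h
    have : (p : ℕ) ∣ 2 := by
      have := (CharP.cast_eq_zero_iff (ZMod p) p 2).mp (by exact_mod_cast h)
      exact this
    exact h2 ((Nat.prime_dvd_prime_iff_eq hp (by norm_num)).mp this)
  have h8Z : (8 : ZMod p) ≠ 0 := by
    have : (8 : ZMod p) = 2 ^ 3 := by norm_num
    rw [this]; exact pow_ne_zero 3 h2Z
  constructor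
  · rintro ⟨x, hx⟩
    set t : ZMod p := 26 * x - x ^ 2 - 88 with htdef
    have ht : t ^ 3 + 8 * t ^ 2 - 128 * t - 512 = 0 := by
      rw [htdef]
      linear_combination (-x^3 + 30*x^2 - 188*x + 328) * hx
    set y : ZMod p := t * (8 : ZMod p)⁻¹ with hydef
    have h8y : (8 : ZMod p) * y = t := by
      rw [hydef, mul_comm, mul_assoc, inv_mul_cancel₀ h8Z, mul_one]
    have h512 : (512 : ZMod p) ≠ 0 := by
      have : (512 : ZMod p) = 8 ^ 3 := by norm_num
      rw [this]; exact pow_ne_zero 3 h8Z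
    refine ⟨y, ?_⟩
    apply mul_left_cancel₀ h512
    rw [mul_zero]
    linear_combination ht + (64*y^2 + 8*y*t + t^2 + 64*y + 8*t - 128) * h8y
  · rintro ⟨y, hy⟩
    exact ⟨8 * y ^ 2 + 4 * y + 4, by
      linear_combination (512*y^3 + 256*y^2 - 1152*y - 64) * hy⟩
end

section
/- Let ζ ∈ ℂ be a primitive 13th root of unity. Set γ = 1 − ζ² − ζ³ − ζ¹⁰ − ζ¹¹ and δ = ζ⁴ + ζ⁶ + ζ⁷ + ζ⁹, and θ = 20γ − 4δ. Then θ³ − 84θ² + 896θ − 1984 = 0, i.e., θ is a root of the cubic u(X) = X³ − 84X² + 896X − 1984. In particular the splitting field of u over ℚ is contained in the cyclotomic field ℚ(ζ₁₃). -/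
/-- If `ζ` is a primitive 13th root of unity, then
`θ = 20(1 − ζ² − ζ³ − ζ¹⁰ − ζ¹¹) − 4(ζ⁴ + ζ⁶ + ζ⁷ + ζ⁹)` is a root of the cubic
`u(X) = X³ − 84X² + 896X − 1984`. -/
theorem theta_root_of_u (ζ θ : ℂ) (hζ : IsPrimitiveRoot ζ 13)
    (hθ : θ = 20 * (1 - ζ ^ 2 - ζ ^ 3 - ζ ^ 10 - ζ ^ 11)
            - 4 * (ζ ^ 4 + ζ ^ 6 + ζ ^ 7 + ζ ^ 9)) :
    θ ^ 3 - 84 * θ ^ 2 + 896 * θ - 1984 = 0 := by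
  have h1 : ζ ^ 13 = 1 := hζ.pow_eq_one
  have h2 : 1 + ζ + ζ ^ 2 + ζ ^ 3 + ζ ^ 4 + ζ ^ 5 + ζ ^ 6 + ζ ^ 7 + ζ ^ 8 + ζ ^ 9
      + ζ ^ 10 + ζ ^ 11 + ζ ^ 12 = 0 := by
    have := hζ.geom_sum_eq_zero (by norm_num)
    simp [Finset.sum_range_succ] at this
    linear_combination this
  subst hθ
  linear_combination ((-66816) + (-76480) * ζ ^ 1 + (-101760) * ζ ^ 2 + (-101760) * ζ ^ 3 + (-71936) * ζ ^ 4 + (-57280) * ζ ^ 5 + (-60096) * ζ ^ 6 + (-53696) * ζ ^ 7 + (-43456) * ζ ^ 8 + (-56256) * ζ ^ 9 + (-86592) * ζ ^ 10 + (-81792) * ζ ^ 11 + (-36672) * ζ ^ 12 + (-13440) * ζ ^ 13 + (-16384) * ζ ^ 14 + (-15360) * ζ ^ 15 + (-10560) * ζ ^ 16 + (-17600) * ζ ^ 17 + (-28800) * ζ ^ 18 + (-24000) * ζ ^ 19 + (-8000) * ζ ^ 20) * h1 + (-76480 : ℂ) * h2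
end

section
/- The polynomial u(X) = X³ − 84X² + 896X − 1984, regarded as a polynomial over ℚ, is irreducible, and the Galois group of its splitting field over ℚ is cyclic of order 3. -/
/-!
Reduction mod 3 leaves a cubic with no root in `𝔽₃`, so `u` is irreducible. Over `ℚ(α) = ℚ[X]/(u)`
the polynomial `u` already splits, its other two roots being explicit quadratic polynomials in `α`.
Hence `ℚ(α)` is a splitting field of `u`, the Galois group has order `[ℚ(α) : ℚ] = 3`, and a group
of prime order is cyclic.
-/

open Polynomial

namespace Polynomial

theorem Monic.irreducible_map_rat_of_irreducible_map {S : Type*} [CommRing S] [IsDomain S]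
    (φ : ℤ →+* S) {f : ℤ[X]} (hf : f.Monic) (h : Irreducible (f.map φ)) :
    Irreducible (f.map (Int.castRingHom ℚ)) :=
  (IsPrimitive.Int.irreducible_iff_irreducible_map_cast hf.isPrimitive).mp
    (hf.irreducible_of_irreducible_map φ f h)

theorem X_sub_C_mul_X_sub_C_mul_X_sub_C {R : Type*} [CommRing R] (a b c : R) :
    (X - C a) * (X - C b) * (X - C c) =
      X ^ 3 - C (a + b + c) * X ^ 2 + C (a * b + b * c + c * a) * X - C (a * b * c) := by
  simp only [map_add, map_mul]
  ring

theorem Gal.card_eq_natDegree_of_splits_adjoinRoot {F : Type*} [Field F] {p : F[X]}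
    (hirr : Irreducible p) (hsep : p.Separable)
    (hsplit : (p.map (algebraMap F (AdjoinRoot p))).Splits) :
    Nat.card p.Gal = p.natDegree := by
  have := Fact.mk hirr
  have : IsSplittingField F (AdjoinRoot p) p := by
    refine ⟨hsplit, eq_top_iff.mpr ?_⟩
    rw [← AdjoinRoot.adjoinRoot_eq_top]
    refine Algebra.adjoin_mono (Set.singleton_subset_iff.mpr ?_)
    rw [mem_rootSet]
    exact ⟨hirr.ne_zero, AdjoinRoot.aeval_eq p ▸ AdjoinRoot.mk_self⟩
  rw [Gal.card_of_separable hsep,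
    ← (IsSplittingField.algEquiv (AdjoinRoot p) p).toLinearEquiv.finrank_eq,
    (AdjoinRoot.powerBasis hirr.ne_zero).finrank, AdjoinRoot.powerBasis_dim]

end Polynomial

theorem irreducible_cubic_u_zmod_three :
    Irreducible (X ^ 3 - 84 * X ^ 2 + 896 * X - 1984 : (ZMod 3)[X]) := by
  have hdeg : (X ^ 3 - 84 * X ^ 2 + 896 * X - 1984 : (ZMod 3)[X]).natDegree = 3 := by
    compute_degree!
  rw [irreducible_iff_roots_eq_zero_of_degree_le_three (by omega) (by omega),
    Multiset.eq_zero_iff_forall_notMem]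
  intro x hx
  rw [mem_roots (ne_zero_of_natDegree_gt (n := 0) (by omega)), IsRoot] at hx
  revert x
  simp only [eval_sub, eval_add, eval_mul, eval_pow, eval_ofNat, eval_X]
  decide

theorem irreducible_cubic_u : Irreducible (X ^ 3 - 84 * X ^ 2 + 896 * X - 1984 : ℚ[X]) := by
  have hmonic : (X ^ 3 - 84 * X ^ 2 + 896 * X - 1984 : ℤ[X]).Monic := by monicity!
  have h := hmonic.irreducible_map_rat_of_irreducible_map (Int.castRingHom (ZMod 3)) (by
    simpa only [Polynomial.map_sub, Polynomial.map_add, Polynomial.map_mul, Polynomial.map_pow,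
      Polynomial.map_ofNat, map_X] using irreducible_cubic_u_zmod_three)
  simpa only [Polynomial.map_sub, Polynomial.map_add, Polynomial.map_mul, Polynomial.map_pow,
      Polynomial.map_ofNat, map_X] using h

theorem splits_cubic_u_adjoinRoot :
    ((X ^ 3 - 84 * X ^ 2 + 896 * X - 1984 : ℚ[X]).map
      (algebraMap ℚ (AdjoinRoot (X ^ 3 - 84 * X ^ 2 + 896 * X - 1984 : ℚ[X])))).Splits := by
  have := Fact.mk irreducible_cubic_u
  set α := AdjoinRoot.root (X ^ 3 - 84 * X ^ 2 + 896 * X - 1984 : ℚ[X])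
  have hα : α ^ 3 - 84 * α ^ 2 + 896 * α - 1984 = 0 := by
    have h : aeval α (X ^ 3 - 84 * X ^ 2 + 896 * X - 1984 : ℚ[X]) = 0 :=
      (AdjoinRoot.aeval_eq _).trans AdjoinRoot.mk_self
    simpa only [map_sub, map_add, map_mul, map_pow, map_ofNat, aeval_X] using h
  -- The other two roots, read off from the factorisation of `u` over `ℚ(α)`; `α ↦ β` generates
  -- the Galois group.
  set β := 112 - (422 / 31) * α + (21 / 124) * α ^ 2
  set γ := -28 + (391 / 31) * α - (21 / 124) * α ^ 2
  have h₁ : α + β + γ = 84 := by ring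
  have h₂ : α * β + β * γ + γ * α = 896 := by
    linear_combination (63 / 31 - 441 / 15376 * α) * hα
  have h₃ : α * β * γ = 1984 := by
    linear_combination (1 + 63 / 31 * α - 441 / 15376 * α ^ 2) * hα
  have hfactor : (X ^ 3 - 84 * X ^ 2 + 896 * X - 1984 : ℚ[X]).map (algebraMap ℚ _) =
      (X - C α) * (X - C β) * (X - C γ) := by
    rw [X_sub_C_mul_X_sub_C_mul_X_sub_C, h₁, h₂, h₃]
    simp only [Polynomial.map_sub, Polynomial.map_add, Polynomial.map_mul, Polynomial.map_pow,
      Polynomial.map_ofNat, map_X, map_ofNat]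
  have hsplit := ((Splits.X_sub_C α).mul (Splits.X_sub_C β)).mul (Splits.X_sub_C γ)
  rwa [← hfactor] at hsplit

/-- The cubic `u(X) = X³ − 84X² + 896X − 1984` is irreducible over `ℚ` and the
Galois group of its splitting field over `ℚ` is cyclic of order 3. -/
theorem cubic_u_irreducible_cyclic_galois :
    Irreducible (X ^ 3 - 84 * X ^ 2 + 896 * X - 1984 : ℚ[X]) ∧
    IsCyclic (X ^ 3 - 84 * X ^ 2 + 896 * X - 1984 : ℚ[X]).Gal ∧
    Nat.card (X ^ 3 - 84 * X ^ 2 + 896 * X - 1984 : ℚ[X]).Gal = 3 := by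
  have hcard : Nat.card (X ^ 3 - 84 * X ^ 2 + 896 * X - 1984 : ℚ[X]).Gal = 3 := by
    rw [Gal.card_eq_natDegree_of_splits_adjoinRoot irreducible_cubic_u
      irreducible_cubic_u.separable splits_cubic_u_adjoinRoot]
    compute_degree!
  exact ⟨irreducible_cubic_u, isCyclic_of_prime_card hcard, hcard⟩
end
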